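/- arXiv:2208.13069 — 10 statements merged into one kernel-verified Lean document; each statement's English description precedes it below -/
import Mathlib

section
/- Let G be a countable group, M ⊆ G a finite subset, V a finite-dimensional vector space over a field k, and S = L(V^M, V). Then for every s ∈ S^G the image σ_s(V^G) of the linear NUCA σ_s is a closed subset of V^G with respect to the prodiscrete topology. -/
open scoped BigOperators Pointwise

/-- The linear NUCA `σ_s : V^G → V^G` with memory `M ⊆ G` associated with the
configuration of local defining maps `s`, given in coefficient form:
`σ_s(x)(g) = ∑_{m ∈ M} s(g,m)(x(g·m))`. -/
def nucaMap {k V G : Type*} [Field k] [AddCommGroup V] [Module k V] [Group G]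
    (M : Finset G) (s : G → G → (V →ₗ[k] V)) (x : G → V) : G → V :=
  fun g => ∑ m ∈ M, s g m (x (g * m))

/-- The prodiscrete topology on the configuration space `G → A`: the product
topology where each factor `A` carries the discrete topology. -/
def prodiscrete (G A : Type*) : TopologicalSpace (G → A) :=
  @Pi.topologicalSpace G (fun _ => A) (fun _ => ⊥)

section Aux

variable {k V G : Type*} [Field k] [AddCommGroup V] [Module k V] [Group G]

/-- The linear map `(x, t) ↦ σ_s(x)(g) - t • y(g)` on `V^G × k`. -/
def nucaPhi (M : Finset G) (s : G → G → (V →ₗ[k] V)) (y : G → V) (g : G) :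
    ((G → V) × k) →ₗ[k] V where
  toFun p := nucaMap M s p.1 g - p.2 • y g
  map_add' p q := by
    simp only [nucaMap, Prod.fst_add, Pi.add_apply, map_add, Finset.sum_add_distrib,
      Prod.snd_add, add_smul]
    abel
  map_smul' c p := by
    simp only [nucaMap, Prod.smul_fst, Pi.smul_apply, map_smul, Prod.smul_snd,
      smul_eq_mul, mul_smul, RingHom.id_apply, ← Finset.smul_sum, ← smul_sub]

/-- Projection of `V^G × k` onto the coordinates in a finite set `D` (and `k`). -/
def nucaProj (D : Finset G) : ((G → V) × k) →ₗ[k] ((D → V) × k) where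
  toFun p := (fun d => p.1 d.1, p.2)
  map_add' _ _ := rfl
  map_smul' _ _ := rfl

/-- Restriction map between finite-coordinate projections. -/
def nucaRes {D D' : Finset G} (h : D ⊆ D') : ((D' → V) × k) →ₗ[k] ((D → V) × k) where
  toFun p := (fun d => p.1 ⟨d.1, h d.2⟩, p.2)
  map_add' _ _ := rfl
  map_smul' _ _ := rfl

lemma nucaRes_comp_proj {D D' : Finset G} (h : D ⊆ D') :
    (nucaRes (k := k) (V := V) h).comp (nucaProj D') = nucaProj D := rfl

end Aux

/-- Key algebraic lemma: if `y` is approximated by images of `σ_s` on every finite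
window, then `y` is in the image of `σ_s`. -/
theorem nuca_key {k V G : Type*} [Field k] [AddCommGroup V] [Module k V]
    [FiniteDimensional k V] [Group G] [Countable G]
    (M : Finset G) (s : G → G → (V →ₗ[k] V)) (y : G → V)
    (hy : ∀ F : Finset G, ∃ x, ∀ g ∈ F, nucaMap M s x g = y g) :
    ∃ x, nucaMap M s x = y := by
  classical
  haveI : Nonempty G := ⟨1⟩
  obtain ⟨e, he⟩ := exists_surjective_nat G
  -- an exhausting sequence of finite subsets of `G`
  set E : ℕ → Finset G := fun n => (Finset.range (n + 1)).image e with hE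
  have hEmono : Monotone E := fun a b hab =>
    Finset.image_subset_image (Finset.range_subset_range.2 (by omega))
  have hEmem : ∀ g : G, ∃ n, ∀ m, n ≤ m → g ∈ E m := by
    intro g
    obtain ⟨n, rfl⟩ := he g
    exact ⟨n, fun m hm => Finset.mem_image.2 ⟨n, Finset.mem_range.2 (by omega), rfl⟩⟩
  set D : ℕ → Finset G := fun n => E n * M ∪ E n with hD
  have hDmono : Monotone D := fun a b hab =>
    Finset.union_subset_union (Finset.mul_subset_mul_right (hEmono hab)) (hEmono hab)
  -- locality of `σ_s`
  have hloc : ∀ n (g : G), g ∈ E n → ∀ x x' : G → V,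
      (∀ h ∈ D n, x h = x' h) → nucaMap M s x g = nucaMap M s x' g := by
    intro n g hg x x' hxx'
    refine Finset.sum_congr rfl fun m hm => ?_
    rw [hxx' (g * m) (Finset.mem_union_left _ (Finset.mul_mem_mul hg hm))]
  -- the submodules `A m` of pairs `(x, t)` with `σ_s(x) = t • y` on `E m`
  set A : ℕ → Submodule k ((G → V) × k) :=
    fun m => ⨅ g ∈ E m, LinearMap.ker (nucaPhi M s y g) with hA
  have hAmem : ∀ m (p : (G → V) × k),
      p ∈ A m ↔ ∀ g ∈ E m, nucaMap M s p.1 g = p.2 • y g := by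
    intro m p
    simp only [hA, Submodule.mem_iInf, LinearMap.mem_ker, nucaPhi, LinearMap.coe_mk,
      AddHom.coe_mk, sub_eq_zero]
    exact forall₂_congr fun g _ => sub_eq_zero
  have hAanti : ∀ a b, a ≤ b → A b ≤ A a := fun a b hab p hp =>
    (hAmem a p).2 fun g hg => (hAmem b p).1 hp g (hEmono hab hg)
  have hAne : ∀ m, ∃ x : G → V, ((x, (1 : k)) : (G → V) × k) ∈ A m := by
    intro m
    obtain ⟨x, hx⟩ := hy (E m)
    exact ⟨x, (hAmem m _).2 fun g hg => by simpa using hx g hg⟩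
  -- projections of the `A m` to finitely many coordinates
  set B : ∀ n : ℕ, ℕ → Submodule k ((D n → V) × k) :=
    fun n m => (A m).map (nucaProj (D n)) with hB
  -- each chain `m ↦ B n m` stabilizes (Artinian finite-dimensional spaces)
  have hstab : ∀ n, ∃ N, ∀ m, N ≤ m → B n m = B n N := by
    intro n
    obtain ⟨N, hN⟩ := IsArtinian.monotone_stabilizes (R := k)
      (M := (D n → V) × k)
      ⟨fun m => OrderDual.toDual (B n m),
        fun a b hab => Submodule.map_mono (hAanti a b hab)⟩
    exact ⟨N, fun m hm => (OrderDual.toDual.injective (hN m hm)).symm⟩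
  choose N hN using hstab
  set C : ∀ n : ℕ, Submodule k ((D n → V) × k) :=
    fun n => B n (max n (N n)) with hC
  have hCB : ∀ n m, N n ≤ m → B n m = C n := fun n m hm =>
    (hN n m hm).trans (hN n (max n (N n)) (le_max_right _ _)).symm
  -- Mittag-Leffler: the restriction maps between the `C n` are surjective
  have hsurj : ∀ n, ∀ c ∈ C n,
      ∃ c' ∈ C (n + 1), nucaRes (hDmono (Nat.le_succ n)) c' = c := by
    intro n c hc
    set m := max (N n) (N (n + 1)) with hm
    have h1 : C (n + 1) = B (n + 1) m := (hCB (n + 1) m (le_max_right _ _)).symm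
    have h2 : C n = B n m := (hCB n m (le_max_left _ _)).symm
    have h3 : (B (n + 1) m).map (nucaRes (hDmono (Nat.le_succ n))) = B n m := by
      rw [hB, ← Submodule.map_comp, nucaRes_comp_proj]
    rw [h2, ← h3] at hc
    obtain ⟨c', hc', hcc'⟩ := hc
    exact ⟨c', h1 ▸ hc', hcc'⟩
  choose f hf1 hf2 using hsurj
  -- the base point: an element of `C 0` with second coordinate `1`
  obtain ⟨x0, hx0⟩ := hAne (max 0 (N 0))
  set c0 : (D 0 → V) × k := nucaProj (D 0) (x0, (1 : k)) with hc0def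
  have hc0 : c0 ∈ C 0 := Submodule.mem_map_of_mem hx0
  have hc02 : c0.2 = 1 := rfl
  -- the compatible sequence
  let p : ∀ n : ℕ, (D n → V) × k := fun n =>
    Nat.rec c0 (fun n c => if h : c ∈ C n then f n c h else 0) n
  have hpsucc : ∀ n, p (n + 1) = if h : p n ∈ C n then f n (p n) h else 0 := fun n => rfl
  have hpC : ∀ n, p n ∈ C n := by
    intro n
    induction n with
    | zero => exact hc0
    | succ n ih => rw [hpsucc n, dif_pos ih]; exact hf1 n (p n) ih
  have hpres : ∀ n, nucaRes (hDmono (Nat.le_succ n)) (p (n + 1)) = p n := by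
    intro n
    rw [hpsucc n, dif_pos (hpC n)]
    exact hf2 n (p n) (hpC n)
  have hp2 : ∀ n, (p n).2 = 1 := by
    intro n
    induction n with
    | zero => exact hc02
    | succ n ih =>
      have : (nucaRes (k := k) (V := V) (hDmono (Nat.le_succ n)) (p (n + 1))).2
          = (p (n + 1)).2 := rfl
      rw [← ih, ← hpres n]
      rfl
  -- compatibility of the sequence over coordinates
  have hcompat : ∀ n m (h : n ≤ m) (g : G) (hg : g ∈ D n),
      (p m).1 ⟨g, hDmono h hg⟩ = (p n).1 ⟨g, hg⟩ := by
    intro n m h g hg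
    induction m, h using Nat.le_induction with
    | base => rfl
    | succ m hm ih =>
      have := congrArg Prod.fst (hpres m)
      have h2 : (p (m + 1)).1 ⟨g, hDmono (Nat.le_succ m) (hDmono hm hg)⟩
          = (p m).1 ⟨g, hDmono hm hg⟩ := congrFun this ⟨g, hDmono hm hg⟩
      exact h2.trans ih
  -- the limit configuration `x`
  choose idx hidx using hEmem
  have hgD : ∀ (g : G) (m : ℕ), idx g ≤ m → g ∈ D m := fun g m hm =>
    Finset.mem_union_right _ (hidx g m hm)
  set x : G → V := fun g => (p (idx g)).1 ⟨g, hgD g _ le_rfl⟩ with hx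
  have hxp : ∀ n (g : G) (hg : g ∈ D n), x g = (p n).1 ⟨g, hg⟩ := by
    intro n g hg
    have h1 := hcompat (idx g) (max n (idx g)) (le_max_right _ _) g (hgD g _ le_rfl)
    have h2 := hcompat n (max n (idx g)) (le_max_left _ _) g hg
    exact h1.symm.trans h2
  refine ⟨x, funext fun g => ?_⟩
  -- verify `σ_s(x)(g) = y(g)`
  set n := idx g with hn
  have hgE : g ∈ E n := hidx g n le_rfl
  have hpn : p n ∈ C n := hpC n
  rw [hC] at hpn
  obtain ⟨q, hqA, hq⟩ := hpn
  have hq2 : q.2 = 1 := by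
    have : (nucaProj (k := k) (V := V) (D n) q).2 = q.2 := rfl
    rw [← this, hq, hp2 n]
  have hqy : nucaMap M s q.1 g = y g := by
    have := (hAmem _ q).1 hqA g (hEmono (le_max_left n (N n)) hgE)
    rwa [hq2, one_smul] at this
  have hxq : ∀ h ∈ D n, x h = q.1 h := by
    intro h hh
    rw [hxp n h hh, ← hq]
    rfl
  rw [hloc n g hgE x q.1 hxq, hqy]

/-- The image of a linear NUCA with finite memory over a finite-dimensional vector
space alphabet is closed in the prodiscrete topology. -/
theorem stmt0 {k V G : Type*} [Field k] [AddCommGroup V] [Module k V]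
    [FiniteDimensional k V] [Group G] [Countable G]
    (M : Finset G) (s : G → G → (V →ₗ[k] V)) (hs : ∀ g, ∀ m ∉ M, s g m = 0) :
    @IsClosed (G → V) (prodiscrete G V) (Set.range (nucaMap M s)) := by
  classical
  letI : TopologicalSpace V := ⊥
  haveI : DiscreteTopology V := ⟨rfl⟩
  show IsClosed (Set.range (nucaMap M s))
  rw [← closure_subset_iff_isClosed]
  intro y hy
  have hy' : ∀ F : Finset G, ∃ x, ∀ g ∈ F, nucaMap M s x g = y g := by
    intro F
    have hUeq : {z : G → V | ∀ g ∈ F, z g = y g}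
        = ⋂ g ∈ F, (fun z : G → V => z g) ⁻¹' {y g} := by
      ext z; simp
    have hU : IsOpen {z : G → V | ∀ g ∈ F, z g = y g} := by
      rw [hUeq]
      exact isOpen_biInter_finset fun g _ =>
        (continuous_apply g).isOpen_preimage _ (isOpen_discrete _)
    obtain ⟨z, hz1, hz2⟩ := mem_closure_iff.1 hy _ hU (fun g _ => rfl)
    obtain ⟨x, rfl⟩ := hz2
    exact ⟨x, hz1⟩
  exact nuca_key M s y hy'
end

section
/- Let G be a countable group, M ⊆ G a finite subset, V a finite-dimensional vector space over a field k, S = L(V^M, V), and s ∈ S^G. Then the linear NUCA σ_s is surjective if and only if σ_p is surjective for every p ∈ Σ(s) (i.e., σ_s is surjective if and only if it is stably surjective). -/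
open scoped BigOperators

/-- `Σ(s)`: the closure, in the prodiscrete topology (local maps `S` discrete),
of the shift orbit `{g·s : g ∈ G}` of the configuration of local defining maps `s`,
where `(g·s)(h) = s(g⁻¹h)`. -/
def orbitClosure {G E : Type*} [Group G] (s : G → G → E) : Set (G → G → E) :=
  @closure _ (@Pi.topologicalSpace G (fun _ => G → E) (fun _ => ⊥))
    (Set.range fun g : G => fun h : G => s (g⁻¹ * h))

lemma orbitClosure_agree {G E : Type*} [Group G] (s p : G → G → E)
    (hp : p ∈ orbitClosure s) (F : Finset G) :
    ∃ g : G, ∀ h ∈ F, p h = s (g⁻¹ * h) := by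
  letI : TopologicalSpace (G → E) := ⊥
  haveI : DiscreteTopology (G → E) := ⟨rfl⟩
  have hO : IsOpen (Set.pi (↑F) fun h => ({p h} : Set (G → E))) :=
    isOpen_set_pi F.finite_toSet (fun h _ => isOpen_discrete _)
  have hpO : p ∈ Set.pi (↑F) fun h => ({p h} : Set (G → E)) := by
    intro h _; rfl
  have := mem_closure_iff.mp hp _ hO hpO
  obtain ⟨q, hq1, g, rfl⟩ := this
  exact ⟨g, fun h hh => (hq1 h hh).symm⟩

lemma self_mem_orbitClosure {G E : Type*} [Group G] (s : G → G → E) :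
    s ∈ orbitClosure s := by
  letI : TopologicalSpace (G → E) := ⊥
  apply subset_closure
  exact ⟨1, by funext h; simp⟩

/-- partial surjectivity on every finite window -/
def PartSurj {k V G : Type*} [Field k] [AddCommGroup V] [Module k V] [Group G]
    (M : Finset G) (p : G → G → (V →ₗ[k] V)) : Prop :=
  ∀ (F : Finset G) (y : G → V), ∃ x : G → V, ∀ g ∈ F, nucaMap M p x g = y g

lemma partSurj_of_surjective {k V G : Type*} [Field k] [AddCommGroup V] [Module k V] [Group G]
    (M : Finset G) (s : G → G → (V →ₗ[k] V)) (h : Function.Surjective (nucaMap M s)) :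
    PartSurj M s := by
  intro F y
  obtain ⟨x, hx⟩ := h y
  exact ⟨x, fun g _ => by rw [hx]⟩

lemma partSurj_shiftAgree {k V G : Type*} [Field k] [AddCommGroup V] [Module k V] [Group G]
    (M : Finset G) (s p : G → G → (V →ₗ[k] V)) (hps : PartSurj M s)
    (hagree : ∀ F : Finset G, ∃ g : G, ∀ h ∈ F, p h = s (g⁻¹ * h)) :
    PartSurj M p := by
  classical
  intro F y
  obtain ⟨g, hg⟩ := hagree F
  obtain ⟨x', hx'⟩ := hps (F.image (fun e => g⁻¹ * e)) (fun h => y (g * h))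
  refine ⟨fun h => x' (g⁻¹ * h), fun e he => ?_⟩
  have h1 : nucaMap M p (fun h => x' (g⁻¹ * h)) e = nucaMap M s x' (g⁻¹ * e) := by
    unfold nucaMap
    refine Finset.sum_congr rfl fun m _ => ?_
    rw [hg e he, mul_assoc]
  rw [h1, hx' (g⁻¹ * e) (Finset.mem_image_of_mem _ he)]
  simp

lemma surjective_of_partSurj {k V G : Type*} [Field k] [AddCommGroup V] [Module k V]
    [FiniteDimensional k V] [Group G] [Countable G]
    (M : Finset G) (p : G → G → (V →ₗ[k] V)) (hps : PartSurj M p) :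
    Function.Surjective (nucaMap M p) := by
  classical
  intro y
  obtain ⟨f, hf⟩ := exists_surjective_nat G
  set E : ℕ → Finset G := fun n => (Finset.range n).image f with hE
  have hEmono : ∀ {a b : ℕ}, a ≤ b → E a ⊆ E b := by
    intro a b hab
    exact Finset.image_subset_image (Finset.range_subset_range.2 hab)
  set D : ℕ → Finset G := fun n => E n ∪ (E n ×ˢ M).image (fun q => q.1 * q.2) with hD
  have hDmono : ∀ {a b : ℕ}, a ≤ b → D a ⊆ D b := by
    intro a b hab
    exact Finset.union_subset_union (hEmono hab)
      (Finset.image_subset_image (Finset.product_subset_product_left (hEmono hab)))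
  have hmulD : ∀ n, ∀ e ∈ E n, ∀ m ∈ M, e * m ∈ D n := by
    intro n e he m hm
    exact Finset.mem_union_right _ (Finset.mem_image.2 ⟨(e, m), Finset.mk_mem_product he hm, rfl⟩)
  -- the linear maps
  let σL : (G → V) →ₗ[k] (G → V) :=
    { toFun := nucaMap M p
      map_add' := by
        intro a b; funext g
        simp [nucaMap, Finset.sum_add_distrib]
      map_smul' := by
        intro c a; funext g
        simp [nucaMap, Finset.smul_sum] }
  let Φ : ∀ n : ℕ, (G → V) →ₗ[k] (↥(E n) → V) :=
    fun n => (LinearMap.funLeft k V (fun e : ↥(E n) => (e : G))).comp σL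
  let π : ∀ n : ℕ, (G → V) →ₗ[k] (↥(D n) → V) :=
    fun n => LinearMap.funLeft k V (fun d : ↥(D n) => (d : G))
  have hΦ : ∀ n (x : G → V) (e : ↥(E n)), Φ n x e = nucaMap M p x e := fun n x e => rfl
  have hπ : ∀ n (x : G → V) (d : ↥(D n)), π n x d = x d := fun n x d => rfl
  set X : ℕ → Set (G → V) := fun n => {x | Φ n x = fun e : ↥(E n) => y e.1} with hX
  have hXmem : ∀ n (x : G → V), x ∈ X n ↔ Φ n x = fun e : ↥(E n) => y e.1 :=
    fun n x => Iff.rfl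
  have hXne : ∀ n, (X n).Nonempty := by
    intro n
    obtain ⟨x, hx⟩ := hps (E n) y
    refine ⟨x, (hXmem n x).2 (funext fun e => ?_)⟩
    rw [hΦ]; exact hx e e.2
  have hXanti : ∀ {a b : ℕ}, a ≤ b → X b ⊆ X a := by
    intro a b hab x hx
    rw [hXmem] at hx ⊢
    funext e
    have := congrFun hx ⟨(e : G), hEmono hab e.2⟩
    rw [hΦ] at this ⊢
    exact this
  have hfactor : ∀ n (x x' : G → V), π n x = π n x' → Φ n x = Φ n x' := by
    intro n x x' hxx'
    funext e
    rw [hΦ, hΦ]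
    unfold nucaMap
    refine Finset.sum_congr rfl fun m hm => ?_
    have : x ((e : G) * m) = x' ((e : G) * m) := by
      have := congrFun hxx' ⟨(e : G) * m, hmulD n e e.2 m hm⟩
      rw [hπ, hπ] at this; exact this
    rw [this]
  have hker : ∀ {a b : ℕ}, a ≤ b → LinearMap.ker (Φ b) ≤ LinearMap.ker (Φ a) := by
    intro a b hab x hx
    rw [LinearMap.mem_ker] at hx ⊢
    funext e
    have := congrFun hx ⟨(e : G), hEmono hab e.2⟩
    rw [hΦ] at this
    rw [hΦ]
    exact this
  -- the chain of projected kernels stabilizes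
  set C : ∀ n : ℕ, ℕ → Submodule k (↥(D n) → V) :=
    fun n j => Submodule.map (π n) (LinearMap.ker (Φ j)) with hC
  have hCanti : ∀ n, ∀ {a b : ℕ}, a ≤ b → C n b ≤ C n a := by
    intro n a b hab
    exact Submodule.map_mono (hker hab)
  have hstab : ∀ n, ∃ N, ∀ j, N ≤ j → C n j = C n N := by
    intro n
    obtain ⟨N, hN⟩ := IsArtinian.monotone_stabilizes
      (⟨fun j => OrderDual.toDual (C n j), fun a b hab => hCanti n hab⟩ :
        ℕ →o (Submodule k (↥(D n) → V))ᵒᵈ)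
    exact ⟨N, fun j hj => (hN j hj).symm⟩
  choose N hN using hstab
  -- eventual image equality
  have himg : ∀ n {a b : ℕ}, N n ≤ a → a ≤ b → π n '' X b = π n '' X a := by
    intro n a b hNa hab
    apply Set.Subset.antisymm (Set.image_mono (hXanti hab))
    rintro _ ⟨x0, hx0, rfl⟩
    obtain ⟨c, hc⟩ := hXne b
    have hca : c ∈ X a := hXanti hab hc
    rw [hXmem] at hx0 hca
    have hkermem : x0 - c ∈ LinearMap.ker (Φ a) := by
      rw [LinearMap.mem_ker, map_sub, hx0, hca, sub_self]
    have h1 : π n (x0 - c) ∈ C n a := ⟨x0 - c, hkermem, rfl⟩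
    have h2 : π n (x0 - c) ∈ C n b := by
      rw [hN n b (le_trans hNa hab), ← hN n a hNa]; exact h1
    obtain ⟨u, hu, huπ⟩ := h2
    refine ⟨c + u, ?_, ?_⟩
    · rw [hXmem] at hc ⊢
      rw [map_add, hc, LinearMap.mem_ker.1 hu, add_zero]
    · rw [map_add, huπ, map_sub]; abel
  -- the index function K
  set K : ℕ → ℕ := fun n => Nat.rec (N 0) (fun n ih => max ih (max (N (n + 1)) (n + 1))) n
    with hK
  have hKsucc : ∀ n, K n ≤ K (n + 1) := fun n => le_max_left _ _
  have hKN : ∀ n, N n ≤ K n := by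
    intro n
    cases n with
    | zero => exact le_refl _
    | succ m => exact le_trans (le_max_left _ _) (le_max_right _ _)
  have hKself : ∀ n, n ≤ K n := by
    intro n
    cases n with
    | zero => exact Nat.zero_le _
    | succ m => exact le_trans (le_max_right _ _) (le_max_right _ _)
  have hKmono : ∀ {a b : ℕ}, a ≤ b → K a ≤ K b := by
    intro a b hab
    induction b with
    | zero => cases Nat.le_zero.1 hab; exact le_refl _
    | succ m ih =>
      rcases Nat.lt_or_ge a (m + 1) with h | h
      · exact le_trans (ih (Nat.lt_succ_iff.1 h)) (hKsucc m)
      · have : a = m + 1 := le_antisymm hab h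
        subst this; exact le_refl _
  set Z : ∀ n : ℕ, Set (↥(D n) → V) := fun n => π n '' X (K n) with hZ
  have hZrep : ∀ n {j : ℕ}, K n ≤ j → π n '' X j = Z n := by
    intro n j hj
    exact himg n (hKN n) hj
  -- restriction maps
  let res : ∀ n : ℕ, (↥(D (n + 1)) → V) →ₗ[k] (↥(D n) → V) :=
    fun n => LinearMap.funLeft k V
      (fun d : ↥(D n) => (⟨(d : G), hDmono (Nat.le_succ n) d.2⟩ : ↥(D (n + 1))))
  have hres : ∀ n (x : G → V), res n (π (n + 1) x) = π n x := fun n x => rfl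
  have hZsurj : ∀ n, ∀ z ∈ Z n, ∃ z' ∈ Z (n + 1), res n z' = z := by
    intro n z hz
    rw [← hZrep n (hKsucc n)] at hz
    obtain ⟨x, hx, rfl⟩ := hz
    exact ⟨π (n + 1) x, ⟨x, hx, rfl⟩, hres n x⟩
  -- build the compatible sequence
  have hZne : (Z 0).Nonempty := (hXne (K 0)).image _
  let zseq : ∀ n : ℕ, {v : ↥(D n) → V // v ∈ Z n} :=
    fun n => Nat.rec ⟨hZne.choose, hZne.choose_spec⟩
      (fun m prev =>
        ⟨(hZsurj m prev.1 prev.2).choose, (hZsurj m prev.1 prev.2).choose_spec.1⟩) n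
  have hzstep : ∀ m : ℕ, res m (zseq (m + 1)).1 = (zseq m).1 :=
    fun m => (hZsurj m (zseq m).1 (zseq m).2).choose_spec.2
  -- cross-level compatibility
  have hcompat : ∀ (a b : ℕ) (h : a ≤ b) (g : G) (hga : g ∈ D a),
      (zseq b).1 ⟨g, hDmono h hga⟩ = (zseq a).1 ⟨g, hga⟩ := by
    intro a b h
    induction b, h using Nat.le_induction with
    | base => intro g hga; rfl
    | succ m hm ih =>
      intro g hga
      have h1 := congrFun (hzstep m) ⟨g, hDmono hm hga⟩
      have h2 : res m (zseq (m + 1)).1 ⟨g, hDmono hm hga⟩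
          = (zseq (m + 1)).1 ⟨g, hDmono (Nat.le_succ_of_le hm) hga⟩ := rfl
      rw [h2] at h1
      rw [h1]
      exact ih g hga
  -- glue
  let x : G → V := fun g =>
    if h : ∃ n, g ∈ D n then (zseq (Nat.find h)).1 ⟨g, Nat.find_spec h⟩ else 0
  have hxval : ∀ (n : ℕ) (g : G) (hg : g ∈ D n), x g = (zseq n).1 ⟨g, hg⟩ := by
    intro n g hg
    have hex : ∃ m, g ∈ D m := ⟨n, hg⟩
    show (if h : ∃ n, g ∈ D n then (zseq (Nat.find h)).1 ⟨g, Nat.find_spec h⟩ else 0)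
      = (zseq n).1 ⟨g, hg⟩
    rw [dif_pos hex]
    have hle1 : Nat.find hex ≤ max (Nat.find hex) n := le_max_left _ _
    have hle2 : n ≤ max (Nat.find hex) n := le_max_right _ _
    rw [← hcompat _ _ hle1 g (Nat.find_spec hex), ← hcompat _ _ hle2 g hg]
  have hπx : ∀ n : ℕ, π n x = (zseq n).1 := by
    intro n
    funext d
    rw [hπ]
    exact hxval n d.1 d.2
  have hxX : ∀ n : ℕ, x ∈ X n := by
    intro n
    have hz : (zseq n).val ∈ ⇑(π n) '' X (K n) := (zseq n).2
    obtain ⟨x', hx', hπx'⟩ := hz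
    have hx'n : x' ∈ X n := hXanti (hKself n) hx'
    rw [hXmem] at hx'n ⊢
    rw [hfactor n x x' (by rw [hπx n, hπx'])]
    exact hx'n
  refine ⟨x, funext fun g => ?_⟩
  obtain ⟨i, rfl⟩ := hf g
  have hgE : f i ∈ E (i + 1) :=
    Finset.mem_image_of_mem f (Finset.mem_range.2 (Nat.lt_succ_self i))
  have := congrFun ((hXmem _ x).1 (hxX (i + 1))) ⟨f i, hgE⟩
  rw [hΦ] at this
  exact this

/-- A linear NUCA with finite memory over a finite-dimensional vector space alphabet
is surjective if and only if it is stably surjective. -/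
theorem stmt1 {k V G : Type*} [Field k] [AddCommGroup V] [Module k V]
    [FiniteDimensional k V] [Group G] [Countable G]
    (M : Finset G) (s : G → G → (V →ₗ[k] V)) (hs : ∀ g, ∀ m ∉ M, s g m = 0) :
    Function.Surjective (nucaMap M s) ↔
      ∀ p ∈ orbitClosure s, Function.Surjective (nucaMap M p) := by
  constructor
  · intro hsurj p hp
    exact surjective_of_partSurj M p
      (partSurj_shiftAgree M s p (partSurj_of_surjective M s hsurj)
        (orbitClosure_agree s p hp))
  · intro hall
    exact hall s (self_mem_orbitClosure s)
end

section
/- Let M be a finite subset of a group G, let V be a vector space over a field k, let S = L(V^M, V), and let s, t ∈ S^G be such that σ_s ∘ σ_t = id on V^G. Then the linear NUCA σ_s is post-surjective. -/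
open scoped BigOperators

/-- Two configurations are asymptotic if they agree outside a finite set. -/
def Asymptotic {G A : Type*} (x y : G → A) : Prop :=
  Set.Finite {g : G | x g ≠ y g}

/-- A map `σ : V^G → V^G` is post-surjective if for all `x, y` with `y` asymptotic to
`σ(x)` there is `z` asymptotic to `x` with `σ(z) = y`. -/
def PostSurjective {G V : Type*} (σ : (G → V) → (G → V)) : Prop :=
  ∀ x y : G → V, Asymptotic y (σ x) → ∃ z : G → V, Asymptotic z x ∧ σ z = y

/-!
If `σ_t` is a right inverse of `σ_s`, a finite perturbation `d = y - σ_s x` of the image is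
reached by the perturbation `z = x + σ_t d` of `x`. Since `σ_t` is local (with finite memory), it
maps finitely supported configurations to finitely supported ones, so `z` is asymptotic to `x`.
-/

theorem asymptotic_iff_finite_support_sub {G A : Type*} [AddGroup A] {x y : G → A} :
    Asymptotic x y ↔ (Function.support (x - y)).Finite := by
  simp only [Asymptotic, Function.support, Pi.sub_apply, sub_ne_zero]

theorem PostSurjective.of_rightInverse {G A : Type*} [AddCommGroup A]
    (σ τ : (G → A) →+ (G → A)) (hστ : ∀ x, σ (τ x) = x)
    (hτ : ∀ d : G → A, (Function.support d).Finite → (Function.support (τ d)).Finite) :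
    PostSurjective σ := by
  intro x y hxy
  refine ⟨x + τ (y - σ x), ?_, by rw [map_add, hστ, add_sub_cancel]⟩
  rw [asymptotic_iff_finite_support_sub, add_sub_cancel_left]
  exact hτ _ (asymptotic_iff_finite_support_sub.1 hxy)

section nucaMap

variable {k V G : Type*} [Field k] [AddCommGroup V] [Module k V] [Group G]

theorem nucaMap_add (M : Finset G) (s : G → G → (V →ₗ[k] V)) (x y : G → V) :
    nucaMap M s (x + y) = nucaMap M s x + nucaMap M s y := by
  funext g
  simp only [nucaMap, Pi.add_apply, map_add, Finset.sum_add_distrib]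

theorem support_nucaMap_subset (M : Finset G) (s : G → G → (V →ₗ[k] V)) (x : G → V) :
    Function.support (nucaMap M s x) ⊆ ⋃ m ∈ M, (· * m⁻¹) '' Function.support x := by
  intro g hg
  obtain ⟨m, hm, hne⟩ := Finset.exists_ne_zero_of_sum_ne_zero hg
  have hx : x (g * m) ≠ 0 := fun h0 => hne (by rw [h0, map_zero])
  exact Set.mem_biUnion hm ⟨g * m, hx, mul_inv_cancel_right g m⟩

theorem Set.Finite.support_nucaMap (M : Finset G) (s : G → G → (V →ₗ[k] V)) {x : G → V}
    (hx : (Function.support x).Finite) : (Function.support (nucaMap M s x)).Finite :=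
  (M.finite_toSet.biUnion fun m _ => hx.image (· * m⁻¹)).subset (support_nucaMap_subset M s x)

end nucaMap

theorem stmt3_general {k V G : Type*} [Field k] [AddCommGroup V] [Module k V] [Group G]
    (M : Finset G) (s t : G → G → (V →ₗ[k] V))
    (h : ∀ x : G → V, nucaMap M s (nucaMap M t x) = x) :
    PostSurjective (nucaMap M s) :=
  PostSurjective.of_rightInverse (AddMonoidHom.mk' (nucaMap M s) (nucaMap_add M s))
    (AddMonoidHom.mk' (nucaMap M t) (nucaMap_add M t)) h
    (fun _ hd => hd.support_nucaMap M t)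

/-- A right-invertible linear NUCA is post-surjective: if `σ_s ∘ σ_t = id` then
`σ_s` is post-surjective. -/
theorem stmt3 {k V G : Type*} [Field k] [AddCommGroup V] [Module k V] [Group G]
    (M : Finset G) (s t : G → G → (V →ₗ[k] V))
    (hs : ∀ g, ∀ m ∉ M, s g m = 0) (ht : ∀ g, ∀ m ∉ M, t g m = 0)
    (h : ∀ x : G → V, nucaMap M s (nucaMap M t x) = x) :
    PostSurjective (nucaMap M s) :=
  stmt3_general M s t h
end

section
/- Let M be a finite subset of a countable group G, let V be a finite-dimensional vector space over a field k, and let S = L(V^M, V). For every s ∈ S^G and every p ∈ S^G with p ∈ Σ(s), the dual configuration p* belongs to Σ(s*); moreover the resulting map φ : Σ(s) → Σ(s*), φ(p) = p*, is a bijection and is G-equivariant, i.e., (g·p)* = g·(p*) for all g ∈ G and p ∈ Σ(s). -/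
open scoped BigOperators

/-- The dual configuration `s*` of local defining maps, in coefficient form:
`s*(g,m) = (s(g·m, m⁻¹))ᵀ`, the transpose (dual map) of `s(g·m, m⁻¹)`. -/
def dualCoeff {k V G : Type*} [Field k] [AddCommGroup V] [Module k V] [Group G]
    (s : G → G → (V →ₗ[k] V)) :
    G → G → (Module.Dual k V →ₗ[k] Module.Dual k V) :=
  fun g m => (s (g * m) m⁻¹).dualMap

open scoped Pointwise

open Function Set

/-! Put `transposeCoeff D p (g, m) = D (p (g m, m⁻¹))`, so that `dualCoeff` is definitionally
`transposeCoeff Module.Dual.transpose`. Since `(g m) m⁻¹ = g`, `transposeCoeff D'` undoes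
`transposeCoeff D` whenever `D' ∘ D = id`, and transposition is injective because a vector space
embeds in its double dual; equivariance is associativity. `transposeCoeff D` is not continuous for
the prodiscrete topology, but every element of `Σ(s)` vanishes off `M` in its second argument, so
coordinate `g` of `transposeCoeff D p` depends only on the finitely many coordinates `g m` with
`m⁻¹ ∈ M`. This carries `Σ(s)` into `Σ(s*)`, and the same argument for `s*`, which vanishes
off `M⁻¹`, gives surjectivity. -/

theorem Module.Dual.transpose_injective {R M M' : Type*} [CommSemiring R] [AddCommMonoid M]
    [Module R M] [AddCommMonoid M'] [Module R M'] [Module.Projective R M'] :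
    Function.Injective ⇑(Module.Dual.transpose (R := R) (M := M) (M' := M')) := fun _ _ h =>
  LinearMap.ext fun v => Module.eval_apply_injective R <| LinearMap.ext fun φ =>
    LinearMap.congr_fun (LinearMap.congr_fun h φ) v

theorem mem_closure_pi_discrete_iff {ι : Type*} {E : ι → Type*} {A : Set (∀ i, E i)}
    {q : ∀ i, E i} :
    q ∈ @closure _ (@Pi.topologicalSpace ι E fun _ => ⊥) A ↔
      ∀ F : Finset ι, ∃ a ∈ A, ∀ i ∈ F, a i = q i := by
  let _ : ∀ i, TopologicalSpace (E i) := fun _ => ⊥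
  have _ : ∀ i, DiscreteTopology (E i) := fun _ => ⟨rfl⟩
  rw [mem_closure_iff]
  constructor
  · intro h F
    obtain ⟨a, ha, haA⟩ := h (Set.pi F fun i => {q i})
      (isOpen_set_pi F.finite_toSet fun i _ => isOpen_discrete _) fun i _ => rfl
    exact ⟨a, haA, ha⟩
  · intro h o ho hq
    obtain ⟨I, u, hu, hsub⟩ := isOpen_pi_iff.mp ho q hq
    obtain ⟨a, haA, ha⟩ := h I
    exact ⟨a, hsub fun i hi => (ha i hi) ▸ (hu i hi).2, haA⟩

section OrbitClosure

variable {G E E' : Type*} [Group G]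

theorem mem_orbitClosure_iff {s p : G → G → E} :
    p ∈ orbitClosure s ↔ ∀ F : Finset G, ∃ c : G, ∀ g ∈ F, p g = s (c⁻¹ * g) := by
  simp only [orbitClosure, mem_closure_pi_discrete_iff, exists_range_iff, eq_comm]

theorem forall_apply_of_mem_orbitClosure {s p : G → G → E} {P : G → E → Prop}
    (hs : ∀ g m, P m (s g m)) (hp : p ∈ orbitClosure s) (g m : G) : P m (p g m) := by
  obtain ⟨c, hc⟩ := mem_orbitClosure_iff.1 hp {g}
  rw [hc g (Finset.mem_singleton_self g)]
  exact hs _ m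

def transposeCoeff (D : E → E') (p : G → G → E) : G → G → E' :=
  fun g m => D (p (g * m) m⁻¹)

theorem transposeCoeff_shift (D : E → E') (p : G → G → E) (c : G) :
    transposeCoeff D (fun h => p (c⁻¹ * h)) = fun h => transposeCoeff D p (c⁻¹ * h) := by
  funext g m
  simp only [transposeCoeff, mul_assoc]

theorem transposeCoeff_transposeCoeff {E'' : Type*} (D : E → E') (D' : E' → E'')
    (p : G → G → E) : transposeCoeff D' (transposeCoeff D p) = fun g m => D' (D (p g m)) := by
  funext g m
  simp only [transposeCoeff, mul_inv_cancel_right, inv_inv]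

theorem leftInverse_transposeCoeff {D : E → E'} {D' : E' → E} (h : LeftInverse D' D) :
    LeftInverse (transposeCoeff (G := G) D') (transposeCoeff D) := fun p => by
  simp only [transposeCoeff_transposeCoeff, h _]

theorem transposeCoeff_mem_orbitClosure {D : E → E'} {s p : G → G → E} {M : Finset G} {z : E}
    (hs : ∀ g, ∀ m ∉ M, s g m = z) (hp : p ∈ orbitClosure s) :
    transposeCoeff D p ∈ orbitClosure (transposeCoeff D s) := by
  classical
  have hpz : ∀ g, ∀ m ∉ M, p g m = z :=
    forall_apply_of_mem_orbitClosure (P := fun m e => m ∉ M → e = z) hs hp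
  rw [mem_orbitClosure_iff] at hp ⊢
  intro F
  obtain ⟨c, hc⟩ := hp (F * M⁻¹)
  refine ⟨c, fun h hh => funext fun m => ?_⟩
  show D (p (h * m) m⁻¹) = D (s (c⁻¹ * h * m) m⁻¹)
  by_cases hm : m⁻¹ ∈ M
  · rw [mul_assoc, hc _ (Finset.mul_mem_mul hh (Finset.mem_inv'.2 hm))]
  · rw [hpz _ _ hm, hs _ _ hm]

theorem bijOn_transposeCoeff_orbitClosure {D : E → E'} {s : G → G → E} {M : Finset G} {z : E}
    (hD : Injective D) (hs : ∀ g, ∀ m ∉ M, s g m = z) :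
    BijOn (transposeCoeff D) (orbitClosure s) (orbitClosure (transposeCoeff D s)) := by
  classical
  have : Nonempty E := ⟨z⟩
  have hinv : LeftInverse (invFun D) D := leftInverse_invFun hD
  refine ⟨fun _ => transposeCoeff_mem_orbitClosure hs,
    (leftInverse_transposeCoeff hinv).injective.injOn, fun q hq => ?_⟩
  have hs' : ∀ g, ∀ m ∉ M⁻¹, transposeCoeff D s g m = D z := fun g m hm =>
    congrArg D (hs _ _ (Finset.mem_inv'.not.1 hm))
  have hq_range : ∀ g m, q g m ∈ range D :=
    forall_apply_of_mem_orbitClosure (P := fun _ e => e ∈ range D)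
      (fun _ _ => mem_range_self _) hq
  refine ⟨transposeCoeff (invFun D) q, ?_, ?_⟩
  · simpa only [leftInverse_transposeCoeff hinv s] using
      transposeCoeff_mem_orbitClosure (D := invFun D) hs' hq
  · rw [transposeCoeff_transposeCoeff]
    exact funext₂ fun g m => invFun_eq (hq_range g m)

end OrbitClosure

theorem stmt5_general {k V G : Type*} [Field k] [AddCommGroup V] [Module k V]
    [Group G]
    (M : Finset G) (s : G → G → (V →ₗ[k] V)) (hs : ∀ g, ∀ m ∉ M, s g m = 0) :
    (∀ p ∈ orbitClosure s, dualCoeff p ∈ orbitClosure (dualCoeff s)) ∧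
    Set.BijOn (fun p => dualCoeff p) (orbitClosure s) (orbitClosure (dualCoeff s)) ∧
    (∀ g : G, ∀ p ∈ orbitClosure s,
      dualCoeff (fun h => p (g⁻¹ * h)) = fun h => dualCoeff p (g⁻¹ * h)) := by
  have hbij : BijOn (transposeCoeff Module.Dual.transpose) (orbitClosure s)
      (orbitClosure (transposeCoeff Module.Dual.transpose s)) :=
    bijOn_transposeCoeff_orbitClosure Module.Dual.transpose_injective hs
  exact ⟨fun _ hp => hbij.mapsTo hp, hbij, fun g p _ => transposeCoeff_shift _ p g⟩

/-- `p ↦ p*` sends `Σ(s)` into `Σ(s*)`, is a bijection from `Σ(s)` onto `Σ(s*)`, and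
is `G`-equivariant: `(g·p)* = g·(p*)`. -/
theorem stmt5 {k V G : Type*} [Field k] [AddCommGroup V] [Module k V]
    [FiniteDimensional k V] [Group G] [Countable G]
    (M : Finset G) (s : G → G → (V →ₗ[k] V)) (hs : ∀ g, ∀ m ∉ M, s g m = 0) :
    (∀ p ∈ orbitClosure s, dualCoeff p ∈ orbitClosure (dualCoeff s)) ∧
    Set.BijOn (fun p => dualCoeff p) (orbitClosure s) (orbitClosure (dualCoeff s)) ∧
    (∀ g : G, ∀ p ∈ orbitClosure s,
      dualCoeff (fun h => p (g⁻¹ * h)) = fun h => dualCoeff p (g⁻¹ * h)) :=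
  stmt5_general M s hs
end

section
/- Let M be a finite subset of a countable group G, let V be a vector space over a field k, and let S = L(V^M, V). Given s, t ∈ S^G, define p with coefficients p(g,k) = Σ_{h∈G} s(g,h) ∘ t(g·h, h⁻¹k) ∈ End_k(V) for g, k ∈ G (a finite sum, nonzero only for k ∈ M·M). Then σ_p = σ_s ∘ σ_t, and for the dual NUCA one has σ_{p*} = σ_{t*} ∘ σ_{s*} as maps (V*)^G → (V*)^G; that is, (σ_s ∘ σ_t)* = σ_{t*} ∘ σ_{s*}. -/
open scoped BigOperators Pointwise

/-- The coefficients of the composition `σ_s ∘ σ_t`: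
`p(g,k) = ∑_{h ∈ M} s(g,h) ∘ t(g·h, h⁻¹k)` (the sum over all `h ∈ G` reduces to this
finite sum since `s(g,h) = 0` for `h ∉ M`). -/
def compCoeff {k V G : Type*} [Field k] [AddCommGroup V] [Module k V] [Group G]
    (M : Finset G) (s t : G → G → (V →ₗ[k] V)) : G → G → (V →ₗ[k] V) :=
  fun g kk => ∑ h ∈ M, (s g h) ∘ₗ (t (g * h) (h⁻¹ * kk))

/-!
Expanding `σ_s (σ_t x)(g)` gives `∑_{h, m ∈ M} s(g,h) t(gh,m) x(ghm)`, and the substitution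
`k = hm` turns it into `σ_p x (g)`; the vanishing of `t` off `M` lets the range of `k` be `M·M`.
For the dual, transposition reverses composition, and the substitution `h' = kh` shows that
`p* = t* ∘ s*` as coefficients (with memory `M⁻¹`), so the first part applied to `t*, s*`
gives `σ_{p*} = σ_{t*} ∘ σ_{s*}`. This needs `s` to vanish off `M` too, which costs nothing:
neither side sees the values of `s` off `M`.
-/

theorem Finset.sum_eq_sum_mul_left_of_support {G β : Type*} [Group G] [AddCommMonoid β]
    {M N : Finset G} {f : G → β} (a : G)
    (hM : ∀ x ∉ M, f x = 0) (hN : ∀ x ∉ N, f (a * x) = 0) :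
    ∑ x ∈ M, f x = ∑ x ∈ N, f (a * x) := by
  rw [← finsum_eq_sum_of_support_subset f (Function.support_subset_iff'.2 hM),
    ← finsum_eq_sum_of_support_subset (fun x => f (a * x)) (Function.support_subset_iff'.2 hN)]
  exact (finsum_comp_equiv (Equiv.mulLeft a)).symm

section Coefficients

variable {k V G : Type*} [Field k] [AddCommGroup V] [Module k V]
  {M : Finset G} {s t : G → G → (V →ₗ[k] V)}

noncomputable def restrictCoeff (M : Finset G) (s : G → G → (V →ₗ[k] V)) : G → G → (V →ₗ[k] V) :=
  fun g => Set.indicator M (s g)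

theorem restrictCoeff_of_notMem {g m : G} (hm : m ∉ M) : restrictCoeff M s g m = 0 :=
  Set.indicator_of_notMem hm _

theorem restrictCoeff_of_mem {g m : G} (hm : m ∈ M) : restrictCoeff M s g m = s g m :=
  Set.indicator_of_mem hm _

variable [Group G]

theorem compCoeff_restrictCoeff : compCoeff M (restrictCoeff M s) t = compCoeff M s t := by
  funext g kk
  exact Finset.sum_congr rfl fun h hh => by rw [restrictCoeff_of_mem hh]

theorem nucaMap_inv_dualCoeff_restrictCoeff [DecidableEq G] :
    nucaMap M⁻¹ (dualCoeff (restrictCoeff M s)) = nucaMap M⁻¹ (dualCoeff s) := by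
  funext ω g
  exact Finset.sum_congr rfl fun m hm => by
    rw [dualCoeff, dualCoeff, restrictCoeff_of_mem (Finset.mem_inv'.1 hm)]

theorem nucaMap_compCoeff [DecidableEq G] (ht : ∀ g, ∀ m ∉ M, t g m = 0) :
    nucaMap (M * M) (compCoeff M s t) = nucaMap M s ∘ nucaMap M t := by
  funext x g
  simp only [nucaMap, compCoeff, Function.comp_apply, LinearMap.sum_apply,
    LinearMap.comp_apply, map_sum]
  rw [Finset.sum_comm]
  refine Finset.sum_congr rfl fun h hh => ?_
  rw [Finset.sum_eq_sum_mul_left_of_support (N := M) h (fun kk hkk => ?_) (fun m hm => ?_)]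
  · simp only [inv_mul_cancel_left, mul_assoc]
  · have : h⁻¹ * kk ∉ M := fun hmem => hkk (by simpa using Finset.mul_mem_mul hh hmem)
    rw [ht _ _ this, LinearMap.zero_apply, map_zero]
  · rw [inv_mul_cancel_left, ht _ _ hm, LinearMap.zero_apply, map_zero]

theorem dualCoeff_eq_zero_of_notMem_inv [DecidableEq G] (hs : ∀ g, ∀ m ∉ M, s g m = 0) :
    ∀ g, ∀ m ∉ M⁻¹, dualCoeff s g m = 0 := fun g m hm => by
  rw [dualCoeff, hs _ _ (fun h => hm (Finset.mem_inv'.2 h)), LinearMap.dualMap_def, map_zero]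

theorem dualCoeff_compCoeff [DecidableEq G]
    (hs : ∀ g, ∀ m ∉ M, s g m = 0) (ht : ∀ g, ∀ m ∉ M, t g m = 0) :
    dualCoeff (compCoeff M s t) = compCoeff M⁻¹ (dualCoeff t) (dualCoeff s) := by
  funext g kk
  simp only [dualCoeff, compCoeff, LinearMap.dualMap_def, map_sum, Module.Dual.transpose_comp]
  refine (Finset.sum_eq_sum_mul_left_of_support (N := M⁻¹) kk⁻¹ (fun h hh => ?_)
    (fun h hh => ?_)).trans (Finset.sum_congr rfl fun h _ => ?_)
  · rw [hs _ _ hh, map_zero, LinearMap.comp_zero]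
  · have : (kk⁻¹ * h)⁻¹ * kk⁻¹ ∉ M := by
      simpa [mul_assoc] using fun hmem => hh (Finset.mem_inv'.2 hmem)
    rw [ht _ _ this, map_zero, LinearMap.zero_comp]
  · simp only [mul_inv_rev, inv_inv, mul_assoc, mul_inv_cancel_left, mul_inv_cancel, mul_one]

end Coefficients

theorem stmt6_general {k V G : Type*} [Field k] [AddCommGroup V] [Module k V] [Group G]
    [DecidableEq G]
    (M : Finset G) (s t : G → G → (V →ₗ[k] V))
    (ht : ∀ g, ∀ m ∉ M, t g m = 0) :
    nucaMap (M * M) (compCoeff M s t) = (nucaMap M s) ∘ (nucaMap M t) ∧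
    nucaMap (M * M)⁻¹ (dualCoeff (compCoeff M s t)) =
      (nucaMap M⁻¹ (dualCoeff t)) ∘ (nucaMap M⁻¹ (dualCoeff s)) := by
  have hs₀ : ∀ g, ∀ m ∉ M, restrictCoeff M s g m = 0 := fun _ _ => restrictCoeff_of_notMem
  refine ⟨nucaMap_compCoeff ht, ?_⟩
  rw [← compCoeff_restrictCoeff, dualCoeff_compCoeff hs₀ ht, mul_inv_rev,
    nucaMap_compCoeff (dualCoeff_eq_zero_of_notMem_inv hs₀), nucaMap_inv_dualCoeff_restrictCoeff]

/-- `σ_p = σ_s ∘ σ_t` (with memory `M·M`), and for duals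
`(σ_s ∘ σ_t)* = σ_{p*} = σ_{t*} ∘ σ_{s*}`. -/
theorem stmt6 {k V G : Type*} [Field k] [AddCommGroup V] [Module k V] [Group G]
    [DecidableEq G]
    (M : Finset G) (s t : G → G → (V →ₗ[k] V))
    (hs : ∀ g, ∀ m ∉ M, s g m = 0) (ht : ∀ g, ∀ m ∉ M, t g m = 0) :
    nucaMap (M * M) (compCoeff M s t) = (nucaMap M s) ∘ (nucaMap M t) ∧
    nucaMap (M * M)⁻¹ (dualCoeff (compCoeff M s t)) =
      (nucaMap M⁻¹ (dualCoeff t)) ∘ (nucaMap M⁻¹ (dualCoeff s)) :=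
  stmt6_general M s t ht
end

section
/- Let M be a finite subset of a group G, let V be a vector space over a field k, and let S = L(V^M, V). Then for all s ∈ S^G, all finitely supported ω : G → V*, and all c ∈ V^G, one has ⟨σ_{s*}(ω) | c⟩ = ⟨ω | σ_s(c)⟩, where ⟨η | d⟩ = Σ_{g∈G} η(g)(d(g)). -/
open scoped BigOperators Pointwise

/-!
Both pairings are finite double sums over `g ∈ G` and `n ∈ M`; for each fixed `n` the
substitution `g ↦ g * n⁻¹`, a bijection of `G`, carries the terms of one onto those of the other.
-/

open Function

theorem finsum_sum_mul_inv_eq {G R : Type*} [Group G] [AddCommMonoid R] (M : Finset G)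
    (F : G → G → R) (hF : ∀ n ∈ M, HasFiniteSupport (F · n)) :
    ∑ᶠ g, ∑ n ∈ M, F (g * n⁻¹) n = ∑ᶠ h, ∑ n ∈ M, F h n := by
  have hF' : ∀ n ∈ M, HasFiniteSupport fun g => F (g * n⁻¹) n := fun n hn =>
    (hF n hn).preimage (mul_left_injective n⁻¹).injOn
  rw [finsum_sum_comm M _ hF', finsum_sum_comm M _ hF]
  exact Finset.sum_congr rfl fun n _ => finsum_comp_equiv (Equiv.mulRight n⁻¹) (f := (F · n))

section Pairing

variable {k V G : Type*} [Field k] [AddCommGroup V] [Module k V] [Group G]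

theorem map_nucaMap {W : Type*} [AddCommGroup W] [Module k W] (f : V →ₗ[k] W)
    (M : Finset G) (s : G → G → (V →ₗ[k] V)) (c : G → V) (g : G) :
    f (nucaMap M s c g) = ∑ n ∈ M, f (s g n (c (g * n))) :=
  map_sum f _ M

theorem nucaMap_dualCoeff_apply [DecidableEq G] (M : Finset G) (s : G → G → (V →ₗ[k] V))
    (ω : G → Module.Dual k V) (g : G) (v : V) :
    nucaMap M⁻¹ (dualCoeff s) ω g v = ∑ n ∈ M, ω (g * n⁻¹) (s (g * n⁻¹) n v) := by
  simp [nucaMap, dualCoeff, LinearMap.sum_apply]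

end Pairing

theorem stmt7_general {k V G : Type*} [Field k] [AddCommGroup V] [Module k V] [Group G]
    [DecidableEq G]
    (M : Finset G) (s : G → G → (V →ₗ[k] V))
    (ω : G → Module.Dual k V) (hω : (Function.support ω).Finite) (c : G → V) :
    ∑ᶠ g : G, (nucaMap M⁻¹ (dualCoeff s) ω g) (c g) =
      ∑ᶠ g : G, ω g (nucaMap M s c g) := by
  set F : G → G → k := fun h n => ω h (s h n (c (h * n)))
  have hF : ∀ n ∈ M, HasFiniteSupport (F · n) := fun n _ =>
    hω.subset <| support_subset_iff'.2 fun h hh => by simp [F, notMem_support.1 hh]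
  calc ∑ᶠ g, (nucaMap M⁻¹ (dualCoeff s) ω g) (c g)
      = ∑ᶠ g, ∑ n ∈ M, F (g * n⁻¹) n := by
        simp only [nucaMap_dualCoeff_apply, F, inv_mul_cancel_right]
    _ = ∑ᶠ h, ∑ n ∈ M, F h n := finsum_sum_mul_inv_eq M F hF
    _ = ∑ᶠ g, ω g (nucaMap M s c g) := by simp only [map_nucaMap, F]

/-- The natural pairing: `⟨σ_{s*}(ω) | c⟩ = ⟨ω | σ_s(c)⟩` for every finitely supported
`ω : G → V*` and every `c ∈ V^G`, where `⟨η | d⟩ = ∑_{g ∈ G} η(g)(d(g))`. -/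
theorem stmt7 {k V G : Type*} [Field k] [AddCommGroup V] [Module k V] [Group G]
    [DecidableEq G]
    (M : Finset G) (s : G → G → (V →ₗ[k] V)) (hs : ∀ g, ∀ m ∉ M, s g m = 0)
    (ω : G → Module.Dual k V) (hω : (Function.support ω).Finite) (c : G → V) :
    ∑ᶠ g : G, (nucaMap M⁻¹ (dualCoeff s) ω g) (c g) =
      ∑ᶠ g : G, ω g (nucaMap M s c g) :=
  stmt7_general M s ω hω c
end

section
/- Let M be a finite subset of a countable group G, let V be a finite-dimensional vector space over a field k, and let S = L(V^M, V). Then for every s ∈ S^G, the linear NUCA σ_s is stably injective (i.e., σ_p is injective for every p ∈ Σ(s)) if and only if the dual linear NUCA σ_{s*} is stably post-surjective (i.e., σ_q is post-surjective for every q ∈ Σ(s*)). -/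
open scoped BigOperators Pointwise

/-- A map `σ : V^G → V^G` is pre-injective if `σ(x) = σ(y)` implies `x = y` whenever
`x` and `y` are asymptotic. -/
def PreInjective {G V : Type*} (σ : (G → V) → (G → V)) : Prop :=
  ∀ x y : G → V, Asymptotic x y → σ x = σ y → x = y

set_option linter.unusedSectionVars false

namespace Stmt12Aux

open Module

section closure

variable {G : Type*} [Group G] {E : Type*}

lemma mem_orbitClosure_iff (s q : G → G → E) :
    q ∈ orbitClosure s ↔ ∀ F : Finset G, ∃ g : G, ∀ h ∈ F, s (g⁻¹ * h) = q h := by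
  letI : TopologicalSpace (G → E) := ⊥
  haveI : DiscreteTopology (G → E) := ⟨rfl⟩
  have hoc : orbitClosure s
      = closure (Set.range fun g : G => fun h : G => s (g⁻¹ * h)) := rfl
  rw [hoc, mem_closure_iff]
  constructor
  · intro H F
    obtain ⟨r, hro, hrr⟩ := H ((F : Set G).pi (fun h => {q h}))
      (isOpen_set_pi F.finite_toSet (fun _ _ => isOpen_discrete _))
      (fun h _ => rfl)
    obtain ⟨g, rfl⟩ := hrr
    exact ⟨g, fun h hh => hro h hh⟩
  · intro H o ho hqo
    obtain ⟨I, u, hu, hsub⟩ := (isOpen_pi_iff.1 ho) q hqo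
    obtain ⟨g, hg⟩ := H I
    refine ⟨fun h => s (g⁻¹ * h), hsub fun i hi => ?_, Set.mem_range_self g⟩
    rw [hg i hi]
    exact (hu i hi).2

lemma row_eq {s q : G → G → E} (hq : q ∈ orbitClosure s) (h : G) : ∃ g, q h = s g := by
  obtain ⟨g, hg⟩ := (mem_orbitClosure_iff s q).1 hq {h}
  exact ⟨g⁻¹ * h, (hg h (Finset.mem_singleton_self h)).symm⟩

lemma row_support {E₀ : Type*} [Zero E₀] {M : Finset G} {s : G → G → E₀}
    (hs : ∀ g, ∀ m ∉ M, s g m = 0) {q : G → G → E₀} (hq : q ∈ orbitClosure s) :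
    ∀ g, ∀ m ∉ M, q g m = 0 := by
  intro g m hm
  obtain ⟨γ, hγ⟩ := row_eq hq g
  rw [hγ]
  exact hs γ m hm

end closure

section unT

variable {k V : Type*} [Field k] [AddCommGroup V] [Module k V] [FiniteDimensional k V]

/-- The inverse of the transpose operation on endomorphisms, for a
finite-dimensional vector space. -/
noncomputable def unT (f : Module.Dual k V →ₗ[k] Module.Dual k V) : V →ₗ[k] V :=
  ((Module.evalEquiv k V).symm.toLinearMap.comp f.dualMap).comp
    (Module.evalEquiv k V).toLinearMap

lemma unT_dualMap (g : V →ₗ[k] V) : unT (g.dualMap) = g := by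
  ext v
  simp only [unT, LinearMap.comp_apply, LinearEquiv.coe_coe, Module.evalEquiv_apply]
  have := congrFun (congrArg DFunLike.coe (Module.Dual.eval_naturality (R := k) g)) v
  simp only [LinearMap.comp_apply] at this
  rw [this]
  rw [LinearEquiv.symm_apply_eq, Module.evalEquiv_apply]

lemma dualMap_unT (f : Module.Dual k V →ₗ[k] Module.Dual k V) : (unT f).dualMap = f := by
  ext φ v
  simp [unT, Module.apply_evalEquiv_symm_apply]

end unT

section linearity

variable {k V G : Type*} [Field k] [AddCommGroup V] [Module k V] [Group G]

lemma nucaMap_add (M : Finset G) (p : G → G → (V →ₗ[k] V)) (x y : G → V) :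
    nucaMap M p (x + y) = nucaMap M p x + nucaMap M p y := by
  funext g; simp [nucaMap, Finset.sum_add_distrib]

lemma nucaMap_sub (M : Finset G) (p : G → G → (V →ₗ[k] V)) (x y : G → V) :
    nucaMap M p (x - y) = nucaMap M p x - nucaMap M p y := by
  funext g; simp [nucaMap, Finset.sum_sub_distrib]

lemma nucaMap_zero (M : Finset G) (p : G → G → (V →ₗ[k] V)) :
    nucaMap M p (0 : G → V) = 0 := by
  funext g; simp [nucaMap]

end linearity

section dnuca

variable {k V G : Type*} [Field k] [AddCommGroup V] [Module k V] [Group G] [DecidableEq G]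

open scoped Pointwise

/-- The NUCA on finitely supported configurations, as a bundled linear map. -/
noncomputable def dnuca (N : Finset G) (q : G → G → (V →ₗ[k] V)) :
    (G →₀ V) →ₗ[k] (G →₀ V) where
  toFun ω := Finsupp.onFinset (ω.support * N⁻¹) (fun g => ∑ n ∈ N, q g n (ω (g * n)))
    (by
      intro g hg
      obtain ⟨n, hn, hne⟩ : ∃ n ∈ N, q g n (ω (g * n)) ≠ 0 := by
        by_contra hc
        push_neg at hc
        exact hg (Finset.sum_eq_zero hc)
      have hω : ω (g * n) ≠ 0 := fun h => hne (by rw [h, map_zero])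
      have hgn : g * n ∈ ω.support := Finsupp.mem_support_iff.2 hω
      have hgeq : g = (g * n) * n⁻¹ := by group
      rw [hgeq]
      exact Finset.mul_mem_mul hgn (Finset.inv_mem_inv hn))
  map_add' ω ω' := by
    ext g
    simp [Finset.sum_add_distrib]
  map_smul' c ω := by
    ext g
    simp [Finset.smul_sum]

lemma dnuca_coe (N : Finset G) (q : G → G → (V →ₗ[k] V)) (ω : G →₀ V) :
    ⇑(dnuca N q ω) = nucaMap N q ⇑ω := rfl

lemma dnuca_support (N : Finset G) (q : G → G → (V →ₗ[k] V)) (ω : G →₀ V) :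
    (dnuca N q ω).support ⊆ ω.support * N⁻¹ := by
  intro g hg
  rw [Finsupp.mem_support_iff, dnuca_coe] at hg
  obtain ⟨n, hn, hne⟩ : ∃ n ∈ N, q g n (ω (g * n)) ≠ 0 := by
    by_contra hc
    push_neg at hc
    exact hg (Finset.sum_eq_zero hc)
  have hω : ω (g * n) ≠ 0 := fun h => hne (by rw [h, map_zero])
  have hgeq : g = (g * n) * n⁻¹ := by group
  rw [hgeq]
  exact Finset.mul_mem_mul (Finsupp.mem_support_iff.2 hω) (Finset.inv_mem_inv hn)

end dnuca

section pairing

variable {k V G : Type*} [Field k] [AddCommGroup V] [Module k V] [Group G]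

/-- The pairing between `V^G` and finitely supported `(V^*)^{(G)}`. -/
noncomputable def pairing (x : G → V) : (G →₀ Module.Dual k V) →ₗ[k] k :=
  Finsupp.lsum k (fun g => Module.Dual.eval k V (x g))

lemma pairing_apply (x : G → V) (ω : G →₀ Module.Dual k V) :
    pairing x ω = ω.sum fun g w => w (x g) := by
  rw [pairing, Finsupp.lsum_apply]
  rfl

lemma pairing_single (x : G → V) (g : G) (f : Module.Dual k V) :
    pairing x (Finsupp.single g f) = f (x g) := by
  exact (pairing_apply x _).trans (Finsupp.sum_single_index (by simp))

lemma pairing_zero (ω : G →₀ Module.Dual k V) : pairing (0 : G → V) ω = 0 := by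
  rw [pairing_apply]
  simp [Finsupp.sum]

lemma pairing_surj [FiniteDimensional k V] (F : (G →₀ Module.Dual k V) →ₗ[k] k) :
    ∃ x : G → V, pairing x = F := by
  refine ⟨fun g => (Module.evalEquiv k V).symm (F ∘ₗ Finsupp.lsingle g), ?_⟩
  apply Finsupp.lhom_ext
  intro g f
  rw [pairing_single, Module.apply_evalEquiv_symm_apply]
  simp

end pairing

section adj

open scoped Pointwise

variable {k V G : Type*} [Field k] [AddCommGroup V] [Module k V] [Group G] [DecidableEq G]

lemma adj (M : Finset G) (p : G → G → (V →ₗ[k] V)) (x : G → V)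
    (ω : G →₀ Module.Dual k V) :
    pairing x (dnuca M⁻¹ (dualCoeff p) ω) = pairing (nucaMap M p x) ω := by
  rw [pairing_apply, pairing_apply]
  rw [Finsupp.sum_of_support_subset _ (dnuca_support M⁻¹ (dualCoeff p) ω) _
    (fun i _ => by simp), Finsupp.sum]
  have hL : ∀ g : G, (dnuca M⁻¹ (dualCoeff p) ω g) (x g)
      = ∑ n ∈ M⁻¹, (ω (g * n)) (p (g * n) n⁻¹ (x g)) := by
    intro g
    rw [dnuca_coe]
    simp [nucaMap, dualCoeff, LinearMap.sum_apply]
  have hR : ∀ g : G, (ω g) (nucaMap M p x g) = ∑ m ∈ M, (ω g) (p g m (x (g * m))) := by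
    intro g
    rw [nucaMap]
    exact map_sum (ω g) _ M
  simp only [hL, hR]
  rw [← Finset.sum_product', ← Finset.sum_product']
  refine Finset.sum_bij_ne_zero (fun b _ _ => (b.1 * b.2, b.2⁻¹)) ?_ ?_ ?_ ?_
  · rintro ⟨g, n⟩ hb hne
    simp only [Finset.mem_product] at hb ⊢
    have hωgn : ω (g * n) ≠ 0 := by
      intro h0
      apply hne
      simp [h0]
    exact ⟨Finsupp.mem_support_iff.2 hωgn, Finset.mem_inv'.1 (by simpa using hb.2)⟩
  · rintro ⟨g₁, n₁⟩ h₁₁ h₁₂ ⟨g₂, n₂⟩ h₂₁ h₂₂ heq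
    simp only [Prod.mk.injEq] at heq
    obtain ⟨h1, h2⟩ := heq
    have hn : n₁ = n₂ := inv_injective h2
    subst hn
    have : g₁ = g₂ := mul_right_cancel h1
    simp [this]
  · rintro ⟨h, m⟩ hb hne
    simp only [Finset.mem_product] at hb
    have hωh : ω h ≠ 0 := by
      intro h0
      apply hne
      simp [h0]
    refine ⟨(h * m, m⁻¹), ?_, ?_, ?_⟩
    · simp only [Finset.mem_product]
      exact ⟨Finset.mul_mem_mul (Finsupp.mem_support_iff.2 hωh)
        (by simpa [Finset.mem_inv'] using hb.2), Finset.inv_mem_inv hb.2⟩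
    · simpa using hne
    · simp
  · rintro ⟨g, n⟩ h₁ h₂
    simp

end adj

section core

open scoped Pointwise

variable {k V G : Type*} [Field k] [AddCommGroup V] [Module k V] [FiniteDimensional k V]
  [Group G] [DecidableEq G]

lemma core (M : Finset G) (p : G → G → (V →ₗ[k] V)) :
    Function.Injective (nucaMap M p) ↔ PostSurjective (nucaMap M⁻¹ (dualCoeff p)) := by
  set D := dnuca M⁻¹ (dualCoeff p) with hD
  constructor
  · intro hinj
    have hsurj : ∀ ψ : G →₀ Module.Dual k V, ∃ ζ, D ζ = ψ := by
      intro ψ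
      by_contra hψ
      push_neg at hψ
      have hmem : ψ ∉ LinearMap.range D := by
        rw [LinearMap.mem_range]
        push_neg
        exact hψ
      have hne : (LinearMap.range D).mkQ ψ ≠ 0 := by
        rw [Submodule.mkQ_apply, ne_eq, Submodule.Quotient.mk_eq_zero]
        exact hmem
      obtain ⟨F₀, hF₀⟩ : ∃ F₀ : Module.Dual k ((G →₀ Module.Dual k V) ⧸ LinearMap.range D),
          F₀ ((LinearMap.range D).mkQ ψ) ≠ 0 := by
        by_contra hc
        push_neg at hc
        exact hne ((Module.forall_dual_apply_eq_zero_iff k _).1 hc)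
      obtain ⟨x, hx⟩ := pairing_surj (F₀ ∘ₗ (LinearMap.range D).mkQ)
      have hall : ∀ ω : G →₀ Module.Dual k V, pairing (nucaMap M p x) ω = 0 := by
        intro ω
        rw [← adj M p x ω, ← hD, hx]
        have : D ω ∈ LinearMap.range D := LinearMap.mem_range_self D ω
        simp only [LinearMap.comp_apply, Submodule.mkQ_apply]
        rw [(Submodule.Quotient.mk_eq_zero _).2 this, map_zero]
      have hσx : nucaMap M p x = 0 := by
        funext g
        refine (Module.forall_dual_apply_eq_zero_iff k _).1 fun f => ?_
        rw [← pairing_single (nucaMap M p x) g f]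
        exact hall _
      have hx0 : x = 0 := hinj (by rw [hσx, nucaMap_zero])
      rw [hx0] at hx
      apply hF₀
      have := congrFun (congrArg DFunLike.coe hx) ψ
      rw [pairing_zero] at this
      simpa using this.symm
    intro x y hasym
    have hδ : Set.Finite {g : G | y g - nucaMap M⁻¹ (dualCoeff p) x g ≠ 0} := by
      refine hasym.subset fun g hg => ?_
      simpa [sub_ne_zero] using hg
    set ψ : G →₀ Module.Dual k V :=
      ⟨hδ.toFinset, fun g => y g - nucaMap M⁻¹ (dualCoeff p) x g,
        fun a => Set.Finite.mem_toFinset hδ⟩ with hψdef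
    obtain ⟨ζ, hζ⟩ := hsurj ψ
    refine ⟨x + ⇑ζ, ?_, ?_⟩
    · refine Set.Finite.subset ζ.support.finite_toSet fun g hg => ?_
      simp only [Set.mem_setOf_eq, Pi.add_apply] at hg
      have : ζ g ≠ 0 := fun h => hg (by rw [h, add_zero])
      simpa using this
    · have hcoe : nucaMap M⁻¹ (dualCoeff p) ⇑ζ = ⇑ψ := by
        rw [← dnuca_coe, ← hD, hζ]
      funext g
      rw [nucaMap_add, Pi.add_apply, hcoe]
      show nucaMap M⁻¹ (dualCoeff p) x g + ψ g = y g
      have : ψ g = y g - nucaMap M⁻¹ (dualCoeff p) x g := rfl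
      rw [this]
      abel
  · intro hps
    intro x₁ x₂ hx
    have h0 : nucaMap M p (x₁ - x₂) = 0 := by
      rw [nucaMap_sub, hx, sub_self]
    have hz : x₁ - x₂ = 0 := by
      funext g
      refine (Module.forall_dual_apply_eq_zero_iff k _).1 fun f => ?_
      set ψ : G →₀ Module.Dual k V := Finsupp.single g f with hψdef
      have hasym : Asymptotic ⇑ψ (nucaMap M⁻¹ (dualCoeff p) (0 : G → Module.Dual k V)) := by
        rw [Asymptotic, nucaMap_zero]
        refine Set.Finite.subset ψ.support.finite_toSet fun h hh => ?_
        simpa using hh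
      obtain ⟨z, hzasym, hzeq⟩ := hps 0 ⇑ψ hasym
      have hzfin : Set.Finite {h : G | z h ≠ 0} := by
        refine hzasym.subset fun h hh => ?_
        simpa using hh
      set ζ : G →₀ Module.Dual k V :=
        ⟨hzfin.toFinset, z, fun a => Set.Finite.mem_toFinset hzfin⟩ with hζdef
      have hDζ : D ζ = ψ := by
        apply DFunLike.coe_injective
        exact hzeq
      have : pairing (x₁ - x₂) ψ = 0 := by
        rw [← hDζ, hD, adj M p (x₁ - x₂) ζ, h0, pairing_zero]
      rw [hψdef, pairing_single] at this
      exact this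
    rw [sub_eq_zero] at hz
    exact hz

end core

section oc

open scoped Pointwise

variable {k V G : Type*} [Field k] [AddCommGroup V] [Module k V] [FiniteDimensional k V]
  [Group G] [DecidableEq G]

lemma oc1 {M : Finset G} {s : G → G → (V →ₗ[k] V)} (hs : ∀ g, ∀ m ∉ M, s g m = 0)
    {p : G → G → (V →ₗ[k] V)} (hp : p ∈ orbitClosure s) :
    dualCoeff p ∈ orbitClosure (dualCoeff s) := by
  have hp' := hp
  rw [mem_orbitClosure_iff] at hp ⊢
  intro F
  obtain ⟨g, hg⟩ := hp (F * M⁻¹)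
  refine ⟨g, fun h hh => ?_⟩
  funext m
  show (s (g⁻¹ * h * m) m⁻¹).dualMap = (p (h * m) m⁻¹).dualMap
  by_cases hm : m⁻¹ ∈ M
  · have hmem : h * m ∈ F * M⁻¹ :=
      Finset.mul_mem_mul hh (Finset.mem_inv'.2 (by simpa using hm))
    rw [← hg _ hmem, mul_assoc]
  · rw [hs _ _ hm, row_support hs hp' _ _ hm]

/-- Inverse of `dualCoeff`. -/
noncomputable def invDC (q : G → G → (Module.Dual k V →ₗ[k] Module.Dual k V)) :
    G → G → (V →ₗ[k] V) := fun g m => unT (q (g * m) m⁻¹)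

lemma dualCoeff_invDC (q : G → G → (Module.Dual k V →ₗ[k] Module.Dual k V)) :
    dualCoeff (invDC q) = q := by
  funext g m
  show (unT (q (g * m * m⁻¹) m⁻¹⁻¹)).dualMap = q g m
  rw [mul_inv_cancel_right, inv_inv, dualMap_unT]

lemma oc2 {M : Finset G} {s : G → G → (V →ₗ[k] V)} (hs : ∀ g, ∀ m ∉ M, s g m = 0)
    {q : G → G → (Module.Dual k V →ₗ[k] Module.Dual k V)}
    (hq : q ∈ orbitClosure (dualCoeff s)) :
    invDC q ∈ orbitClosure s := by
  have hq' := hq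
  rw [mem_orbitClosure_iff] at hq ⊢
  intro F
  obtain ⟨g, hg⟩ := hq (F * M)
  refine ⟨g, fun h hh => ?_⟩
  funext m
  show s (g⁻¹ * h) m = unT (q (h * m) m⁻¹)
  by_cases hm : m ∈ M
  · have hmem : h * m ∈ F * M := Finset.mul_mem_mul hh hm
    rw [← hg _ hmem]
    show s (g⁻¹ * h) m = unT ((s (g⁻¹ * (h * m) * m⁻¹) m⁻¹⁻¹).dualMap)
    have hgr : g⁻¹ * (h * m) * m⁻¹ = g⁻¹ * h := by group
    rw [hgr, inv_inv, unT_dualMap]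
  · obtain ⟨γ, hγ⟩ := row_eq hq' (h * m)
    rw [hγ]
    show s (g⁻¹ * h) m = unT ((s (γ * m⁻¹) m⁻¹⁻¹).dualMap)
    rw [inv_inv, hs _ _ hm, hs _ _ hm, unT_dualMap]

end oc

end Stmt12Aux

/-- A linear NUCA `σ_s` over a finite-dimensional vector space alphabet is stably
injective (every `σ_p`, `p ∈ Σ(s)`, is injective) if and only if its dual `σ_{s*}`
is stably post-surjective (every `σ_q`, `q ∈ Σ(s*)`, is post-surjective). -/
theorem stmt12 {k V G : Type*} [Field k] [AddCommGroup V] [Module k V]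
    [FiniteDimensional k V] [Group G] [Countable G] [DecidableEq G]
    (M : Finset G) (s : G → G → (V →ₗ[k] V)) (hs : ∀ g, ∀ m ∉ M, s g m = 0) :
    (∀ p ∈ orbitClosure s, Function.Injective (nucaMap M p)) ↔
      (∀ q ∈ orbitClosure (dualCoeff s), PostSurjective (nucaMap M⁻¹ q)) := by
  constructor
  · intro H q hq
    have hp := Stmt12Aux.oc2 hs hq
    have := (Stmt12Aux.core M (Stmt12Aux.invDC q)).1 (H _ hp)
    rwa [Stmt12Aux.dualCoeff_invDC] at this
  · intro H p hp
    exact (Stmt12Aux.core M p).2 (H _ (Stmt12Aux.oc1 hs hp))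
end

section
/- Let M be a finite subset of a countable group G, let V be a finite-dimensional vector space over a field k, and let S = L(V^M, V). Then for every s ∈ S^G, the linear NUCA σ_s : V^G → V^G is invertible if and only if the dual linear NUCA σ_{s*} : (V*)^G → (V*)^G is invertible. -/
open scoped BigOperators Pointwise

/-- A NUCA `σ` over `W^G` is invertible if there is a linear NUCA with finite memory
which is a two-sided inverse of `σ`. -/
def IsInvertibleNuca (k : Type*) [Field k] {W G : Type*} [AddCommGroup W]
    [Module k W] [Group G] (σ : (G → W) → (G → W)) : Prop :=
  ∃ (N : Finset G) (t : G → G → (W →ₗ[k] W)),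
    (∀ x, nucaMap N t (σ x) = x) ∧ (∀ x, σ (nucaMap N t x) = x)


set_option linter.unusedSectionVars false

section Aux

variable {k V G : Type*} [Field k] [AddCommGroup V] [Module k V] [Group G] [DecidableEq G]

private lemma mem_inv_iff (M : Finset G) (a : G) : a ∈ M⁻¹ ↔ a⁻¹ ∈ M := by
  simp [Finset.mem_inv]

/-- Value of a NUCA applied to a delta configuration. -/
private lemma nuca_delta (M : Finset G) (s : G → G → (V →ₗ[k] V))
    (hs : ∀ g, ∀ m ∉ M, s g m = 0) (g : G) (v : V) (h : G) :
    nucaMap M s (fun h' => if h' = g then v else 0) h = s h (h⁻¹ * g) v := by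
  have key : ∀ m ∈ M,
      s h m (if h * m = g then v else 0) = if m = h⁻¹ * g then s h m v else 0 := by
    intro m _
    by_cases hc : m = h⁻¹ * g
    · subst hc; simp
    · have hne : h * m ≠ g := fun e => hc (by rw [← e]; group)
      simp [hne, hc]
  unfold nucaMap
  rw [Finset.sum_congr rfl key, Finset.sum_ite_eq' M (h⁻¹ * g)]
  by_cases hM : h⁻¹ * g ∈ M
  · simp [hM]
  · simp [hM, hs h _ hM]

/-- The key duality lemma: if `σ_t ∘ σ_s = id` then `σ_{s*} ∘ σ_{t*} = id`. -/
private lemma dual_left_inv (M N : Finset G) (s t : G → G → (V →ₗ[k] V))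
    (hs : ∀ g, ∀ m ∉ M, s g m = 0)
    (h : ∀ x, nucaMap N t (nucaMap M s x) = x) :
    ∀ ω : G → Module.Dual k V,
      nucaMap M⁻¹ (dualCoeff s) (nucaMap N⁻¹ (dualCoeff t) ω) = ω := by
  intro ω
  funext g
  apply LinearMap.ext
  intro v
  set F : G → G → k := fun m n =>
    ω (g * m * n) (t (g * m * n) n⁻¹ (s (g * m) m⁻¹ v)) with hF
  have hL : (nucaMap M⁻¹ (dualCoeff s) (nucaMap N⁻¹ (dualCoeff t) ω) g) v
      = ∑ m ∈ M⁻¹, ∑ n ∈ N⁻¹, F m n := by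
    simp only [nucaMap, dualCoeff, LinearMap.sum_apply, LinearMap.dualMap_apply, hF]
  rw [hL]
  -- terms with m outside M⁻¹ vanish
  have hF0 : ∀ m, m ∉ M⁻¹ → ∀ n, F m n = 0 := by
    intro m hm n
    have hmM : m⁻¹ ∉ M := fun hh => hm ((mem_inv_iff M m).mpr hh)
    simp [hF, hs _ _ hmM]
  -- regroup the double sum
  have hA : ∑ m ∈ M⁻¹, ∑ n ∈ N⁻¹, F m n
      = ∑ a ∈ M⁻¹ * N⁻¹, ∑ n ∈ N⁻¹, F (a * n⁻¹) n := by
    rw [Finset.sum_comm, Finset.sum_comm (s := M⁻¹ * N⁻¹)]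
    refine Finset.sum_congr rfl fun n hn => ?_
    have himg : ∑ a ∈ M⁻¹ * N⁻¹, F (a * n⁻¹) n
        = ∑ b ∈ (M⁻¹ * N⁻¹).image (· * n⁻¹), F b n := by
      rw [Finset.sum_image (fun a _ b _ hab => by
        simpa using mul_right_cancel (hab : a * n⁻¹ = b * n⁻¹))]
    rw [himg]
    refine Finset.sum_subset ?_ ?_
    · intro m hm
      refine Finset.mem_image.mpr ⟨m * n, Finset.mul_mem_mul hm hn, by group⟩
    · intro b _ hb
      exact hF0 b hb n
  rw [hA]
  -- compute the inner sum using the hypothesis on a delta configuration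
  have hB : ∀ a : G, ∑ n ∈ N⁻¹, F (a * n⁻¹) n = if a = 1 then ω (g * a) v else 0 := by
    intro a
    have hinv : ∑ n ∈ N⁻¹, F (a * n⁻¹) n = ∑ n ∈ N, F (a * n) n⁻¹ := by
      rw [show (N⁻¹ : Finset G) = N.image (·⁻¹) from rfl,
        Finset.sum_image (fun x _ y _ hxy => by simpa using hxy)]
      simp
    rw [hinv]
    have hreω : ∀ n, F (a * n) n⁻¹
        = ω (g * a) (t (g * a) n (s (g * a * n) ((g * a * n)⁻¹ * g) v)) := by
      intro n
      have e2 : (n⁻¹ : G)⁻¹ = n := inv_inv n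
      have e3 : g * (a * n) = g * a * n := by group
      have e4 : ((a * n)⁻¹ : G) = (g * a * n)⁻¹ * g := by group
      simp only [hF, e2, e3, e4, mul_inv_cancel_right]
    have hsum : ∑ n ∈ N, F (a * n) n⁻¹
        = ω (g * a) (∑ n ∈ N, t (g * a) n (s (g * a * n) ((g * a * n)⁻¹ * g) v)) := by
      rw [map_sum]
      exact Finset.sum_congr rfl fun n _ => hreω n
    rw [hsum]
    have hdelta : ∑ n ∈ N, t (g * a) n (s (g * a * n) ((g * a * n)⁻¹ * g) v)
        = if g * a = g then v else 0 := by
      have := congrFun (h (fun h' => if h' = g then v else 0)) (g * a)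
      rw [show nucaMap N t (nucaMap M s fun h' => if h' = g then v else 0) (g * a)
          = ∑ n ∈ N, t (g * a) n (s (g * a * n) ((g * a * n)⁻¹ * g) v) from
        Finset.sum_congr rfl fun n _ => by rw [nuca_delta M s hs g v (g * a * n)]] at this
      exact this
    rw [hdelta]
    simp only [mul_eq_left]
    split_ifs with ha
    · rfl
    · exact map_zero _
  rw [Finset.sum_congr rfl fun a _ => hB a, Finset.sum_ite_eq' (M⁻¹ * N⁻¹) (1 : G)]
  by_cases h1 : (1 : G) ∈ M⁻¹ * N⁻¹
  · simp [h1]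
  · -- in this degenerate case `v = 0`
    have hv : v = 0 := by
      have hid := congrFun (h (fun h' => if h' = g then v else 0)) g
      have hz : nucaMap N t (nucaMap M s fun h' => if h' = g then v else 0) g = 0 := by
        show ∑ n ∈ N, t g n (nucaMap M s (fun h' => if h' = g then v else 0) (g * n)) = 0
        refine Finset.sum_eq_zero fun n hn => ?_
        rw [nuca_delta M s hs g v (g * n)]
        have hmem : (g * n)⁻¹ * g ∉ M := by
          intro hmem
          refine h1 (Finset.mem_mul.mpr ⟨((g * n)⁻¹ * g)⁻¹, ?_, n⁻¹,
            (mem_inv_iff N n⁻¹).mpr (by simpa using hn), by group⟩)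
          exact (mem_inv_iff M _).mpr (by simpa using hmem)
        rw [hs _ _ hmem]
        simp
      rw [hz] at hid
      simpa using hid.symm
    simp [h1, hv]

/-- Forward direction: invertibility passes to the dual. -/
private lemma fwd_dual (M : Finset G) (s : G → G → (V →ₗ[k] V))
    (hs : ∀ g, ∀ m ∉ M, s g m = 0) :
    IsInvertibleNuca k (nucaMap M s) →
      IsInvertibleNuca k (nucaMap M⁻¹ (dualCoeff s)) := by
  rintro ⟨N, t, h1, h2⟩
  set t' : G → G → (V →ₗ[k] V) := fun g n => if n ∈ N then t g n else 0 with ht'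
  have hEq : ∀ x, nucaMap N t' x = nucaMap N t x := by
    intro x; funext g
    exact Finset.sum_congr rfl fun n hn => by simp [ht', hn]
  have ht'0 : ∀ g, ∀ n ∉ N, t' g n = 0 := fun g n hn => by simp [ht', hn]
  have h1' : ∀ x, nucaMap N t' (nucaMap M s x) = x := fun x => (hEq _).trans (h1 x)
  have h2' : ∀ x, nucaMap M s (nucaMap N t' x) = x := fun x => by rw [hEq]; exact h2 x
  exact ⟨N⁻¹, dualCoeff t', dual_left_inv N M t' s ht'0 h2',
    dual_left_inv M N s t' hs h1'⟩

/-- Invertibility is preserved under conjugating the alphabet by a linear equivalence. -/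
private lemma stmt13_conj_inv {W : Type*} [AddCommGroup W] [Module k W]
    (M : Finset G) (s : G → G → (V →ₗ[k] V)) (u : G → G → (W →ₗ[k] W))
    (e : V ≃ₗ[k] W) (hcomm : ∀ g m x, u g m (e x) = e (s g m x)) :
    IsInvertibleNuca k (nucaMap M u) → IsInvertibleNuca k (nucaMap M s) := by
  rintro ⟨N, t, h1, h2⟩
  set T : G → G → (V →ₗ[k] V) :=
    fun g n => (e.symm.toLinearMap ∘ₗ t g n) ∘ₗ e.toLinearMap with hTdef
  have hE : ∀ (x : G → V) (g : G),
      nucaMap M u (fun g' => e (x g')) g = e (nucaMap M s x g) := by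
    intro x g
    simp only [nucaMap]
    rw [map_sum]
    exact Finset.sum_congr rfl fun m _ => hcomm g m (x (g * m))
  have hT : ∀ (y : G → V) (g : G),
      nucaMap N T y g = e.symm (nucaMap N t (fun g' => e (y g')) g) := by
    intro y g
    simp only [nucaMap, hTdef, LinearMap.comp_apply, LinearEquiv.coe_coe]
    rw [map_sum]
  refine ⟨N, T, ?_, ?_⟩
  · intro x; funext g
    rw [hT]
    have : (fun g' => e (nucaMap M s x g')) = nucaMap M u (fun g' => e (x g')) :=
      funext fun g' => (hE x g').symm
    rw [this, h1]
    exact e.symm_apply_apply _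
  · intro x; funext g
    have hTx : (fun g' => e (nucaMap N T x g')) = nucaMap N t (fun g'' => e (x g'')) :=
      funext fun g' => by rw [hT]; exact e.apply_symm_apply _
    calc nucaMap M s (nucaMap N T x) g
        = e.symm (e (nucaMap M s (nucaMap N T x) g)) := (e.symm_apply_apply _).symm
      _ = e.symm (nucaMap M u (fun g' => e (nucaMap N T x g')) g) := by rw [hE]
      _ = e.symm (nucaMap M u (nucaMap N t (fun g'' => e (x g''))) g) := by rw [hTx]
      _ = e.symm ((fun g'' => e (x g'')) g) := by rw [h2]
      _ = x g := e.symm_apply_apply _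

end Aux

/-- A linear NUCA `σ_s` over a finite-dimensional vector space alphabet is
invertible if and only if its dual `σ_{s*}` is invertible. -/
theorem stmt13 {k V G : Type*} [Field k] [AddCommGroup V] [Module k V]
    [FiniteDimensional k V] [Group G] [Countable G] [DecidableEq G]
    (M : Finset G) (s : G → G → (V →ₗ[k] V)) (hs : ∀ g, ∀ m ∉ M, s g m = 0) :
    IsInvertibleNuca k (nucaMap M s) ↔
      IsInvertibleNuca k (nucaMap M⁻¹ (dualCoeff s)) := by
  constructor
  · exact fwd_dual M s hs
  · intro hd
    have hs' : ∀ g, ∀ m ∉ M⁻¹, dualCoeff s g m = 0 := by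
      intro g m hm
      have hmM : m⁻¹ ∉ M := fun hh => hm ((mem_inv_iff M m).mpr hh)
      simp only [dualCoeff, hs _ _ hmM]
      ext φ x
      simp
    have hdd := fwd_dual M⁻¹ (dualCoeff s) hs' hd
    rw [show (M⁻¹)⁻¹ = M by simp] at hdd
    have hdc : dualCoeff (dualCoeff s) = fun g m => (s g m).dualMap.dualMap := by
      funext g m
      simp [dualCoeff, mul_inv_cancel_right]
    rw [hdc] at hdd
    exact stmt13_conj_inv M s _ (Module.evalEquiv k V)
      (fun g m x => by ext φ; simp [Module.evalEquiv_apply]) hdd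
end

section
/- Let M be a finite subset of a countable group G, let V be a finite-dimensional vector space over a field k, let S = L(V^M, V), and let s ∈ S^G be such that σ_s is post-surjective. Then there exists a finite subset E ⊆ G with the following property: for all x, y ∈ V^G such that y(g) = σ_s(x)(g) for every g ∈ G with g ≠ 1_G, there exists x' ∈ V^G with σ_s(x') = y and x'(g) = x(g) for every g ∈ G \ E. -/
/-!
Since `σ_s` is linear and post-surjective, every configuration asymptotic to `0 = σ_s(0)`
has a preimage asymptotic to `0`. Fixing such preimages of the configurations supported at
`1_G` with value a basis vector of `V`, their (finite) supports cover a finite set `E`, and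
by linearity every configuration supported at `1_G` has a preimage supported in `E`. The
difference `y - σ_s(x)` is supported at `1_G`, so adding such a preimage to `x` gives `x'`.
-/

open scoped BigOperators

section

variable {k V G : Type*}

def nucaLinearMap [Field k] [AddCommGroup V] [Module k V] [Group G]
    (M : Finset G) (s : G → G → (V →ₗ[k] V)) : (G → V) →ₗ[k] (G → V) where
  toFun := nucaMap M s
  map_add' x y := by
    funext g
    simp only [nucaMap, Pi.add_apply, map_add, Finset.sum_add_distrib]
  map_smul' c x := by
    funext g
    simp only [nucaMap, Pi.smul_apply, map_smul, Finset.smul_sum, RingHom.id_apply]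

theorem PostSurjective.exists_asymptotic_zero_preimage [Zero V] {σ : (G → V) → (G → V)}
    (hσ : PostSurjective σ) (hσ0 : σ 0 = 0) {y : G → V} (hy : Asymptotic y 0) :
    ∃ z : G → V, Asymptotic z 0 ∧ σ z = y :=
  hσ 0 y (by rwa [hσ0])

variable [DivisionRing k] [AddCommGroup V] [Module k V] [FiniteDimensional k V]

theorem PostSurjective.exists_finset_forall_single_preimage [DecidableEq G] [One G]
    {σ : (G → V) →ₗ[k] (G → V)} (hσ : PostSurjective σ) :
    ∃ E : Finset G, ∀ v : V, ∃ z : G → V, σ z = Pi.single 1 v ∧ ∀ g ∉ E, z g = 0 := by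
  let b := Module.finBasis k V
  have single_asymptotic (i) : Asymptotic (Pi.single (1 : G) (b i)) 0 :=
    (Set.finite_singleton 1).subset fun g hg => by
      by_contra hg1
      exact hg (Pi.single_eq_of_ne hg1 _)
  choose z hz_fin hz using fun i => hσ.exists_asymptotic_zero_preimage σ.map_zero
    (single_asymptotic i)
  refine ⟨Finset.univ.biUnion fun i => (hz_fin i).toFinset, fun v => ?_⟩
  refine ⟨∑ i, b.repr v i • z i, ?_, fun g hg => ?_⟩
  · calc σ (∑ i, b.repr v i • z i) = ∑ i, Pi.single (1 : G) (b.repr v i • b i) := by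
          simp only [map_sum, map_smul, hz, Pi.single_smul]
      _ = Pi.single 1 v :=
          (map_sum (AddMonoidHom.single (fun _ : G => V) 1) _ _).symm.trans
            (congrArg _ (b.sum_repr v))
  · have hzg (i) : z i g = 0 := by
      by_contra hne
      exact hg (Finset.mem_biUnion.2 ⟨i, Finset.mem_univ i, (hz_fin i).mem_toFinset.2 hne⟩)
    simp only [Finset.sum_apply, Pi.smul_apply, hzg, smul_zero, Finset.sum_const_zero]

theorem PostSurjective.exists_finset_forall_preimage_eq_off_finset [Group G]
    {σ : (G → V) →ₗ[k] (G → V)} (hσ : PostSurjective σ) :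
    ∃ E : Finset G, ∀ x y : G → V, (∀ g : G, g ≠ 1 → y g = σ x g) →
      ∃ x' : G → V, σ x' = y ∧ ∀ g ∉ E, x' g = x g := by
  classical
  obtain ⟨E, hE⟩ := hσ.exists_finset_forall_single_preimage
  refine ⟨E, fun x y hy => ?_⟩
  obtain ⟨z, hz, hz_supp⟩ := hE (y 1 - σ x 1)
  refine ⟨x + z, ?_, fun g hg => by simp [hz_supp g hg]⟩
  funext g
  rw [map_add, hz, Pi.add_apply]
  by_cases hg : g = 1
  · subst hg
    simp
  · simp [Pi.single_eq_of_ne hg, hy g hg]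

end

theorem stmt14_general {k V G : Type*} [Field k] [AddCommGroup V] [Module k V]
    [FiniteDimensional k V] [Group G]
    (M : Finset G) (s : G → G → (V →ₗ[k] V))
    (hpost : PostSurjective (nucaMap M s)) :
    ∃ E : Finset G, ∀ x y : G → V,
      (∀ g : G, g ≠ 1 → y g = nucaMap M s x g) →
      ∃ x' : G → V, nucaMap M s x' = y ∧ ∀ g ∉ E, x' g = x g :=
  PostSurjective.exists_finset_forall_preimage_eq_off_finset (σ := nucaLinearMap M s) hpost

/-- Weak uniform post-surjectivity: if `σ_s` is post-surjective, then there is a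
finite `E ⊆ G` such that whenever `y` agrees with `σ_s(x)` away from `1_G`, some
`x'` agreeing with `x` outside `E` satisfies `σ_s(x') = y`. -/
theorem stmt14 {k V G : Type*} [Field k] [AddCommGroup V] [Module k V]
    [FiniteDimensional k V] [Group G] [Countable G]
    (M : Finset G) (s : G → G → (V →ₗ[k] V)) (hs : ∀ g, ∀ m ∉ M, s g m = 0)
    (hpost : PostSurjective (nucaMap M s)) :
    ∃ E : Finset G, ∀ x y : G → V,
      (∀ g : G, g ≠ 1 → y g = nucaMap M s x g) →
      ∃ x' : G → V, nucaMap M s x' = y ∧ ∀ g ∉ E, x' g = x g :=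
  stmt14_general M s hpost
end

section
/- Let G be a countable group, let V be a finite-dimensional vector space over a finite field (so V is a finite set), let M ⊆ G be finite, S = L(V^M, V), and s ∈ S^G. Then the following are equivalent: (a) σ_s is invertible; (b) σ_s is pre-injective and stably post-surjective; (c) σ_s is surjective and stably injective. -/
open scoped BigOperators Pointwise

namespace NucaAux

open Filter


variable {k V G : Type*} [Field k] [AddCommGroup V] [Module k V] [Group G]

/-- shift of a coefficient configuration -/
def shiftC {G E : Type*} [Group G] (g : G) (s : G → G → E) : G → G → E :=
  fun h => s (g⁻¹ * h)

lemma nucaMap_add (M : Finset G) (s : G → G → (V →ₗ[k] V)) (x y : G → V) :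
    nucaMap M s (x + y) = nucaMap M s x + nucaMap M s y := by
  funext g
  simp [nucaMap, Finset.sum_add_distrib]

lemma nucaMap_zero (M : Finset G) (s : G → G → (V →ₗ[k] V)) :
    nucaMap M s (0 : G → V) = 0 := by
  funext g; simp [nucaMap]

lemma nucaMap_sub (M : Finset G) (s : G → G → (V →ₗ[k] V)) (x y : G → V) :
    nucaMap M s (x - y) = nucaMap M s x - nucaMap M s y := by
  funext g
  simp [nucaMap, Finset.sum_sub_distrib]

lemma nucaMap_congr {M : Finset G} {s t : G → G → (V →ₗ[k] V)} {x y : G → V} {g : G}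
    (h1 : ∀ m ∈ M, s g m = t g m) (h2 : ∀ m ∈ M, x (g * m) = y (g * m)) :
    nucaMap M s x g = nucaMap M t y g := by
  unfold nucaMap
  exact Finset.sum_congr rfl (fun m hm => by rw [h1 m hm, h2 m hm])

lemma nucaMap_support [DecidableEq G] {M : Finset G} {s : G → G → (V →ₗ[k] V)}
    {S : Finset G} {x : G → V} (hx : ∀ h, x h ≠ 0 → h ∈ S) {g : G}
    (hg : nucaMap M s x g ≠ 0) : g ∈ S * M⁻¹ := by
  unfold nucaMap at hg
  obtain ⟨m, hm, hne⟩ : ∃ m ∈ M, s g m (x (g * m)) ≠ 0 := by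
    by_contra hc
    push_neg at hc
    exact hg (Finset.sum_eq_zero hc)
  have hxm : x (g * m) ≠ 0 := fun h => hne (by rw [h, map_zero])
  have : g * m ∈ S := hx _ hxm
  have : (g * m) * m⁻¹ ∈ S * M⁻¹ := Finset.mul_mem_mul this (Finset.inv_mem_inv hm)
  simpa using this

lemma nucaMap_shiftC (M : Finset G) (c : G → G → (V →ₗ[k] V)) (g : G) (x : G → V) (h : G) :
    nucaMap M (shiftC g c) x h = nucaMap M c (fun h' => x (g * h')) (g⁻¹ * h) := by
  unfold nucaMap shiftC
  refine Finset.sum_congr rfl (fun m hm => ?_)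
  rw [mul_assoc]
  simp [mul_assoc]

/-- conjugation of a two-map composition identity by a shift -/
lemma comp_shiftC {M N : Finset G} {s t : G → G → (V →ₗ[k] V)}
    (hc : ∀ x, nucaMap N t (nucaMap M s x) = x) (g : G) :
    ∀ x, nucaMap N (shiftC g t) (nucaMap M (shiftC g s) x) = x := by
  intro x
  funext h
  rw [nucaMap_shiftC]
  have key : (fun h' => nucaMap M (shiftC g s) x (g * h')) = nucaMap M s (fun h'' => x (g * h'')) := by
    funext h'
    rw [nucaMap_shiftC]
    simp
  rw [key, hc (fun h'' => x (g * h''))]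
  simp

lemma mem_orbitClosure_iff {E : Type*} (s p : G → G → E) :
    p ∈ orbitClosure s ↔ ∀ F : Finset G, ∃ g : G, ∀ h ∈ F, p h = s (g⁻¹ * h) := by
  letI : TopologicalSpace (G → E) := ⊥
  haveI : DiscreteTopology (G → E) := ⟨rfl⟩
  constructor
  · intro hp F
    have hU : IsOpen {q : G → G → E | ∀ h ∈ F, q h = p h} := by
      have : {q : G → G → E | ∀ h ∈ F, q h = p h} =
          ⋂ h ∈ F, (fun q : G → G → E => q h) ⁻¹' {p h} := by
        ext q; simp
      rw [this]
      exact isOpen_biInter_finset fun h _ =>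
        (continuous_apply h).isOpen_preimage _ (isOpen_discrete _)
    obtain ⟨q, hq1, hq2⟩ := (mem_closure_iff.mp hp) _ hU (fun h _ => rfl)
    obtain ⟨g, rfl⟩ := hq2
    exact ⟨g, fun h hh => (hq1 h hh).symm⟩
  · intro H
    rw [orbitClosure, mem_closure_iff]
    intro o ho hpo
    obtain ⟨I, u, hIu, hsub⟩ := isOpen_pi_iff.mp ho p hpo
    obtain ⟨g, hg⟩ := H I
    refine ⟨fun h => s (g⁻¹ * h), hsub fun h hh => ?_, ⟨g, rfl⟩⟩
    rw [← hg h hh]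
    exact (hIu h hh).2

lemma self_mem_orbitClosure {E : Type*} (s : G → G → E) : s ∈ orbitClosure s := by
  rw [mem_orbitClosure_iff]
  exact fun F => ⟨1, fun h _ => by simp⟩

lemma shiftC_mem_orbitClosure {E : Type*} {s p : G → G → E} (hp : p ∈ orbitClosure s) (g : G) :
    shiftC g p ∈ orbitClosure s := by
  rw [mem_orbitClosure_iff] at hp ⊢
  intro F
  classical
  obtain ⟨g₀, hg₀⟩ := hp (F.image (fun h => g⁻¹ * h))
  refine ⟨g * g₀, fun h hh => ?_⟩
  have := hg₀ (g⁻¹ * h) (Finset.mem_image_of_mem _ hh)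
  rw [shiftC, this]
  congr 1
  group

lemma orbitClosure_vanish {M : Finset G} {s : G → G → (V →ₗ[k] V)}
    (hs : ∀ g, ∀ m ∉ M, s g m = 0) {p : G → G → (V →ₗ[k] V)}
    (hp : p ∈ orbitClosure s) : ∀ h, ∀ m ∉ M, p h m = 0 := by
  intro h m hm
  rw [mem_orbitClosure_iff] at hp
  obtain ⟨g, hg⟩ := hp {h}
  rw [hg h (Finset.mem_singleton_self h)]
  exact hs _ m hm



lemma exists_ulim {α : Type*} [Finite α] (U : Ultrafilter ℕ) (f : ℕ → α) :
    ∃ a : α, {n | f n = a} ∈ U := by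
  have hcov : (⋃ a ∈ (Set.univ : Set α), {n | f n = a}) ∈ U := by
    have : (⋃ a ∈ (Set.univ : Set α), {n | f n = a}) = Set.univ := by
      ext n; simp
    rw [this]; exact Filter.univ_mem
  obtain ⟨a, -, ha⟩ := (Ultrafilter.finite_biUnion_mem_iff Set.finite_univ).mp hcov
  exact ⟨a, ha⟩

noncomputable def ulim {α : Type*} [Finite α] (U : Ultrafilter ℕ) (f : ℕ → α) : α :=
  Classical.choose (exists_ulim U f)

lemma ulim_spec {α : Type*} [Finite α] (U : Ultrafilter ℕ) (f : ℕ → α) :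
    {n | f n = ulim U f} ∈ U :=
  Classical.choose_spec (exists_ulim U f)

/-- pointwise ultrafilter limit of configurations with values in a finite type -/
noncomputable def ulimPi {A α : Type*} [Finite α] (U : Ultrafilter ℕ) (q : ℕ → A → α) :
    A → α := fun a => ulim U (fun n => q n a)

lemma ulimPi_spec {A α : Type*} [Finite α] (U : Ultrafilter ℕ) (q : ℕ → A → α)
    (F : Finset A) : {n | ∀ a ∈ F, q n a = ulimPi U q a} ∈ U := by
  have : {n | ∀ a ∈ F, q n a = ulimPi U q a} = ⋂ a ∈ F, {n | q n a = ulimPi U q a} := by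
    ext n; simp
  rw [this]
  exact (biInter_finset_mem F).mpr fun a _ => ulim_spec U (fun n => q n a)

lemma ulimPi_exists {A α : Type*} [Finite α] (U : Ultrafilter ℕ) (q : ℕ → A → α) :
    ∃ Q : A → α, ∀ F : Finset A, {n | ∀ a ∈ F, q n a = Q a} ∈ U :=
  ⟨ulimPi U q, ulimPi_spec U q⟩


variable {k V G : Type*} [Field k] [AddCommGroup V] [Module k V] [Group G]

lemma nucaMap_smul (M : Finset G) (s : G → G → (V →ₗ[k] V)) (c : k) (x : G → V) :
    nucaMap M s (c • x) = c • nucaMap M s x := by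
  funext g
  simp [nucaMap, Finset.smul_sum]

lemma finite_linmaps [Finite V] : Finite (V →ₗ[k] V) :=
  Finite.of_injective (fun f => (f : V → V)) DFunLike.coe_injective

/-- increasing exhaustion of a countable group -/
lemma exists_exhaustion [Countable G] :
    ∃ En : ℕ → Finset G, ∀ T : Finset G, ∀ᶠ n in atTop, T ⊆ En n := by
  classical
  obtain ⟨e, he⟩ := exists_surjective_nat G
  refine ⟨fun n => (Finset.range (n + 1)).image e, fun T => ?_⟩
  have hg : ∀ g : G, ∃ N, ∀ n ≥ N, g ∈ (Finset.range (n + 1)).image e := by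
    intro g
    obtain ⟨kg, hkg⟩ := he g
    exact ⟨kg, fun n hn => Finset.mem_image.mpr ⟨kg, Finset.mem_range.mpr (by omega), hkg⟩⟩
  choose Ng hNg using hg
  refine eventually_atTop.mpr ⟨T.sup Ng, fun n hn g hgT => ?_⟩
  exact hNg g n (le_trans (Finset.le_sup hgT) hn)

lemma uniform_inj [Finite V] [Countable G] {M : Finset G} {s : G → G → (V →ₗ[k] V)}
    (hs : ∀ g, ∀ m ∉ M, s g m = 0)
    (hinj : ∀ p ∈ orbitClosure s, Function.Injective (nucaMap M p)) :
    ∃ E : Finset G, ∀ p ∈ orbitClosure s, ∀ x : G → V,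
      (∀ e ∈ E, nucaMap M p x e = 0) → x 1 = 0 := by
  haveI : Finite (V →ₗ[k] V) := finite_linmaps
  by_contra hcon
  push_neg at hcon
  obtain ⟨En, hEn⟩ := exists_exhaustion (G := G)
  choose p hpS x hx0 hx1 using fun n => hcon (En n)
  classical
  set U : Ultrafilter ℕ := Ultrafilter.of atTop with hUdef
  have hUle : (U : Filter ℕ) ≤ atTop := Ultrafilter.of_le _
  obtain ⟨P2, hP2⟩ := ulimPi_exists U (fun n (c : G × G) => p n c.1 c.2)
  set P : G → G → (V →ₗ[k] V) := fun h m => P2 (h, m) with hPdef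
  obtain ⟨X, hX⟩ := ulimPi_exists U (fun n => x n)
  -- P vanishes off M
  have hPv : ∀ h, ∀ m ∉ M, P h m = 0 := by
    intro h m hm
    obtain ⟨n, hn⟩ := Filter.nonempty_of_mem (hP2 {(h, m)})
    have hnn := hn (h, m) (Finset.mem_singleton_self _)
    show P2 (h, m) = 0
    rw [← hnn]
    exact orbitClosure_vanish hs (hpS n) h m hm
  -- P ∈ orbitClosure s
  have hPS : P ∈ orbitClosure s := by
    rw [mem_orbitClosure_iff]
    intro F
    obtain ⟨n, hn⟩ := Filter.nonempty_of_mem (hP2 (F ×ˢ M))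
    obtain ⟨g, hg⟩ := (mem_orbitClosure_iff s (p n)).mp (hpS n) F
    refine ⟨g, fun h hh => ?_⟩
    funext m
    by_cases hm : m ∈ M
    · have h1 := hn (h, m) (Finset.mem_product.mpr ⟨hh, hm⟩)
      show P2 (h, m) = _
      rw [← h1, hg h hh]
    · show P2 (h, m) = _
      rw [show P2 (h, m) = (0 : V →ₗ[k] V) from hPv h m hm, hs _ m hm]
  -- σ_P X = 0
  have hPX : nucaMap M P X = 0 := by
    funext g
    have hA1 : {n | g ∈ En n} ∈ U := hUle (hEn {g} |>.mono (fun n hn => hn (Finset.mem_singleton_self g)))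
    have hA2 : {n | ∀ c ∈ ({g} ×ˢ M : Finset (G × G)), p n c.1 c.2 = P2 c} ∈ U := hP2 _
    have hA3 : {n | ∀ a ∈ M.image (fun m => g * m), x n a = X a} ∈ U := hX _
    obtain ⟨n, hn1, hn2, hn3⟩ := Filter.nonempty_of_mem (Filter.inter_mem hA1 (Filter.inter_mem hA2 hA3))
    have heq : nucaMap M P X g = nucaMap M (p n) (x n) g := by
      refine nucaMap_congr (fun m hm => ?_) (fun m hm => ?_)
      · exact (hn2 (g, m) (Finset.mem_product.mpr ⟨Finset.mem_singleton_self g, hm⟩)).symm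
      · exact (hn3 (g * m) (Finset.mem_image_of_mem _ hm)).symm
    rw [heq]
    exact hx0 n g hn1
  -- X 1 ≠ 0 yet X = 0 by injectivity
  have hX1 : X 1 ≠ 0 := by
    obtain ⟨n, hn⟩ := Filter.nonempty_of_mem (hX {1})
    rw [← hn 1 (Finset.mem_singleton_self _)]
    exact hx1 n
  have : X = 0 := hinj P hPS (by rw [hPX, nucaMap_zero])
  exact hX1 (by rw [this]; rfl)

variable {k V G : Type*} [Field k] [AddCommGroup V] [Module k V] [Group G]

lemma linear_factor {X Y Z : Type*} [AddCommGroup X] [Module k X] [AddCommGroup Y]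
    [Module k Y] [AddCommGroup Z] [Module k Z] (f : X →ₗ[k] Y) (h : X →ₗ[k] Z)
    (hker : LinearMap.ker f ≤ LinearMap.ker h) : ∃ L : Y →ₗ[k] Z, ∀ x, L (f x) = h x := by
  obtain ⟨q, hq⟩ := Submodule.exists_isCompl (LinearMap.range f)
  set π := Submodule.linearProjOfIsCompl _ q hq with hπ
  set eiso := LinearMap.quotKerEquivRange f with heiso
  set hbar : (X ⧸ LinearMap.ker f) →ₗ[k] Z := Submodule.liftQ _ h hker with hhbar
  refine ⟨hbar ∘ₗ (eiso.symm : (LinearMap.range f) →ₗ[k] (X ⧸ LinearMap.ker f)) ∘ₗ π,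
    fun x => ?_⟩
  have h1 : π (f x) = ⟨f x, LinearMap.mem_range_self f x⟩ :=
    Submodule.linearProjOfIsCompl_apply_left hq ⟨f x, LinearMap.mem_range_self f x⟩
  have h2 : eiso.symm (π (f x)) = Submodule.Quotient.mk x := by
    rw [h1, LinearEquiv.symm_apply_eq, heiso]
    exact Subtype.ext (LinearMap.quotKerEquivRange_apply_mk f x).symm
  calc (hbar ∘ₗ (eiso.symm : (LinearMap.range f) →ₗ[k] (X ⧸ LinearMap.ker f)) ∘ₗ π) (f x)
      = hbar (eiso.symm (π (f x))) := rfl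
    _ = hbar (Submodule.Quotient.mk x) := by rw [h2]
    _ = h x := Submodule.liftQ_apply _ h x

/-- the linear-map version of nucaMap -/
def nucaL (M : Finset G) (s : G → G → (V →ₗ[k] V)) : (G → V) →ₗ[k] (G → V) where
  toFun := nucaMap M s
  map_add' := nucaMap_add M s
  map_smul' := nucaMap_smul M s

lemma stableInj_leftInv {M : Finset G} {s : G → G → (V →ₗ[k] V)}
    {E : Finset G}
    (hE : ∀ p ∈ orbitClosure s, ∀ x : G → V, (∀ e ∈ E, nucaMap M p x e = 0) → x 1 = 0) :
    ∃ (t : G → G → (V →ₗ[k] V)), ∀ x, nucaMap E t (nucaMap M s x) = x := by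
  classical
  -- R g : restriction of σ_s around g
  set R : G → ((G → V) →ₗ[k] (↥E → V)) := fun g =>
    LinearMap.pi (fun e : ↥E => (LinearMap.proj (R := k) (φ := fun _ : G => V) (g * (e : G))) ∘ₗ nucaL M s)
    with hR
  have hker : ∀ g : G, LinearMap.ker (R g) ≤
      LinearMap.ker (LinearMap.proj (R := k) (φ := fun _ : G => V) g) := by
    intro g x hx
    have hx' : ∀ e ∈ E, nucaMap M s x (g * e) = 0 := by
      intro e he
      have := congrFun (LinearMap.mem_ker.mp hx) ⟨e, he⟩
      simpa [hR, nucaL] using this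
    -- use p := shiftC g⁻¹ s and y := fun h => x (g * h)
    have hp : shiftC g⁻¹ s ∈ orbitClosure s :=
      shiftC_mem_orbitClosure (self_mem_orbitClosure s) g⁻¹
    have key := hE _ hp (fun h => x (g * h)) ?_
    · simpa using key
    · intro e he
      have : nucaMap M (shiftC g⁻¹ s) (fun h => x (g * h)) e =
          nucaMap M s x (g * e) := by
        unfold nucaMap shiftC
        refine Finset.sum_congr rfl (fun m hm => ?_)
        simp [mul_assoc]
      rw [this]
      exact hx' e he
  have hfac : ∀ g : G, ∃ L : (↥E → V) →ₗ[k] V, ∀ x, L (R g x) = x g :=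
    fun g => linear_factor (R g) (LinearMap.proj (R := k) (φ := fun _ : G => V) g) (hker g)
  choose L hL using hfac
  refine ⟨fun g e' => if he' : e' ∈ E then (L g) ∘ₗ LinearMap.single k (fun _ : ↥E => V) ⟨e', he'⟩
    else 0, fun x => ?_⟩
  funext g
  show ∑ e' ∈ E, _ = x g
  have step1 : ∑ e' ∈ E, (if he' : e' ∈ E then (L g) ∘ₗ LinearMap.single k (fun _ : ↥E => V) ⟨e', he'⟩ else 0) (nucaMap M s x (g * e'))
      = ∑ i : ↥E, L g (Pi.single i ((R g x) i)) := by
    rw [← Finset.sum_coe_sort E]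
    refine Finset.sum_congr rfl (fun i _ => ?_)
    rw [dif_pos i.2]
    rfl
  rw [step1, ← map_sum, Finset.univ_sum_single]
  exact hL g x

variable {k V G : Type*} [Field k] [AddCommGroup V] [Module k V] [Group G]

lemma inv_stableInj {M N : Finset G} {s t : G → G → (V →ₗ[k] V)}
    (hl : ∀ x, nucaMap N t (nucaMap M s x) = x)
    {p : G → G → (V →ₗ[k] V)} (hp : p ∈ orbitClosure s) :
    Function.Injective (nucaMap M p) := by
  classical
  intro x y hxy
  funext g₀
  have hd : nucaMap M p (x - y) = 0 := by rw [nucaMap_sub, hxy, sub_self]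
  obtain ⟨g, hg⟩ := (mem_orbitClosure_iff s p).mp hp (N.image (fun n => g₀ * n))
  have key := comp_shiftC hl g (x - y)
  have hzero : ∀ n ∈ N, nucaMap M (shiftC g s) (x - y) (g₀ * n) = 0 := by
    intro n hn
    have hcoef : ∀ m ∈ M, shiftC g s (g₀ * n) m = p (g₀ * n) m := by
      intro m _
      rw [hg _ (Finset.mem_image_of_mem _ hn)]; rfl
    have : nucaMap M (shiftC g s) (x - y) (g₀ * n) = nucaMap M p (x - y) (g₀ * n) :=
      nucaMap_congr hcoef (fun _ _ => rfl)
    rw [this, hd]; rfl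
  have hval : (x - y) g₀ = 0 := by
    rw [← key]
    exact Finset.sum_eq_zero fun n hn => by rw [hzero n hn, map_zero]
  have := sub_eq_zero.mp hval
  exact this

lemma inv_stablePost {M N : Finset G} {s t : G → G → (V →ₗ[k] V)}
    (hr : ∀ x, nucaMap M s (nucaMap N t x) = x)
    {p : G → G → (V →ₗ[k] V)} (hp : p ∈ orbitClosure s) :
    PostSurjective (nucaMap M p) := by
  classical
  intro x y hyx
  set w : G → V := y - nucaMap M p x with hw
  have hwfin : Set.Finite {h | w h ≠ 0} := by
    have : {h | w h ≠ 0} = {h : G | y h ≠ nucaMap M p x h} := by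
      ext h; simp [hw, sub_ne_zero]
    rw [this]; exact hyx
  set S : Finset G := hwfin.toFinset with hS
  obtain ⟨g, hg⟩ := (mem_orbitClosure_iff s p).mp hp (S * N⁻¹ * M⁻¹)
  set u : G → V := nucaMap N (shiftC g t) w with hu
  have husupp : ∀ h, u h ≠ 0 → h ∈ S * N⁻¹ := fun h hh =>
    nucaMap_support (fun h' hh' => hwfin.mem_toFinset.mpr hh') hh
  have hq : ∀ z, nucaMap M (shiftC g s) (nucaMap N (shiftC g t) z) = z := comp_shiftC hr g
  have hpu : nucaMap M p u = w := by
    funext h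
    by_cases hcase : ∀ m ∈ M, u (h * m) = 0
    · have h1 : nucaMap M p u h = 0 :=
        Finset.sum_eq_zero fun m hm => by rw [hcase m hm, map_zero]
      have h2 : nucaMap M (shiftC g s) u h = 0 :=
        Finset.sum_eq_zero fun m hm => by rw [hcase m hm, map_zero]
      have h3 : w h = nucaMap M (shiftC g s) u h := (congrFun (hq w) h).symm
      rw [h1, h3, h2]
    · push_neg at hcase
      obtain ⟨m, hm, hum⟩ := hcase
      have hhW : h ∈ S * N⁻¹ * M⁻¹ := by
        have h1 : h * m ∈ S * N⁻¹ := husupp _ hum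
        have h2 := Finset.mul_mem_mul h1 (Finset.inv_mem_inv hm)
        simpa using h2
      have hcoef : ∀ m' ∈ M, p h m' = shiftC g s h m' := by
        intro m' _
        rw [hg h hhW]; rfl
      calc nucaMap M p u h = nucaMap M (shiftC g s) u h :=
            nucaMap_congr hcoef (fun _ _ => rfl)
        _ = w h := congrFun (hq w) h
  refine ⟨x + u, ?_, ?_⟩
  · have : {h | (x + u) h ≠ x h} ⊆ {h | u h ≠ 0} := by
      intro h hh
      simp only [Set.mem_setOf_eq] at hh ⊢
      intro h0
      exact hh (by simp [h0])
    exact Set.Finite.subset (Set.Finite.subset (S * N⁻¹).finite_toSet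
      (fun h hh => husupp h hh)) this
  · rw [nucaMap_add, hpu, hw]
    abel


variable {k V G : Type*} [Field k] [AddCommGroup V] [Module k V] [Group G]
lemma post_to_surj [Finite V] [Countable G] {M : Finset G} {s : G → G → (V →ₗ[k] V)}
    (hps : PostSurjective (nucaMap M s)) : Function.Surjective (nucaMap M s) := by
  classical
  intro y
  obtain ⟨En, hEn⟩ := exists_exhaustion (G := G)
  have hyn : ∀ n : ℕ, Asymptotic (fun h => if h ∈ En n then y h else 0)
      (nucaMap M s 0) := by
    intro n
    rw [nucaMap_zero]
    refine Set.Finite.subset (En n).finite_toSet (fun h hh => ?_)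
    simp only [Set.mem_setOf_eq, Pi.zero_apply] at hh
    by_contra hc
    exact hh (if_neg (fun hmem => hc (Finset.mem_coe.mpr hmem)))
  choose z hz1 hz2 using fun n => hps 0 _ (hyn n)
  set U : Ultrafilter ℕ := Ultrafilter.of atTop with hU
  have hUle : (U : Filter ℕ) ≤ atTop := Ultrafilter.of_le _
  obtain ⟨Z, hZ⟩ := ulimPi_exists U z
  refine ⟨Z, ?_⟩
  funext g
  have hA1 : {n | g ∈ En n} ∈ U :=
    hUle ((hEn {g}).mono (fun n hn => hn (Finset.mem_singleton_self g)))
  have hA2 : {n | ∀ a ∈ M.image (fun m => g * m), z n a = Z a} ∈ U := hZ _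
  obtain ⟨n, hn1, hn2⟩ := Filter.nonempty_of_mem (Filter.inter_mem hA1 hA2)
  have : nucaMap M s Z g = nucaMap M s (z n) g :=
    nucaMap_congr (fun _ _ => rfl)
      (fun m hm => (hn2 (g * m) (Finset.mem_image_of_mem _ hm)).symm)
  rw [this, hz2 n]
  show (if g ∈ En n then y g else 0) = y g
  exact if_pos hn1

lemma uniform_post [Finite V] [Countable G] [DecidableEq G] {M : Finset G}
    {s : G → G → (V →ₗ[k] V)}
    (hs : ∀ g, ∀ m ∉ M, s g m = 0)
    (hpost : ∀ p ∈ orbitClosure s, PostSurjective (nucaMap M p)) :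
    ∃ E : Finset G, ∀ p ∈ orbitClosure s, ∀ v : V,
      ∃ u : G → V, (∀ h, u h ≠ 0 → h ∈ E) ∧ nucaMap M p u = Pi.single 1 v := by
  classical
  haveI : Finite (V →ₗ[k] V) := finite_linmaps
  by_contra hcon
  push_neg at hcon
  obtain ⟨En, hEn⟩ := exists_exhaustion (G := G)
  choose p hpS v hv using fun n => hcon (En n)
  set U : Ultrafilter ℕ := Ultrafilter.of atTop with hU
  have hUle : (U : Filter ℕ) ≤ atTop := Ultrafilter.of_le _
  obtain ⟨P2, hP2⟩ := ulimPi_exists U (fun n (c : G × G) => p n c.1 c.2)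
  set P : G → G → (V →ₗ[k] V) := fun h m => P2 (h, m) with hPdef
  obtain ⟨vv, hvv⟩ := ulimPi_exists U (fun n (_ : Unit) => v n)
  -- P vanishes off M
  have hPv : ∀ h, ∀ m ∉ M, P h m = 0 := by
    intro h m hm
    obtain ⟨n, hn⟩ := Filter.nonempty_of_mem (hP2 {(h, m)})
    have hnn := hn (h, m) (Finset.mem_singleton_self _)
    show P2 (h, m) = 0
    rw [← hnn]
    exact orbitClosure_vanish hs (hpS n) h m hm
  have hPS : P ∈ orbitClosure s := by
    rw [mem_orbitClosure_iff]
    intro F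
    obtain ⟨n, hn⟩ := Filter.nonempty_of_mem (hP2 (F ×ˢ M))
    obtain ⟨g, hg⟩ := (mem_orbitClosure_iff s (p n)).mp (hpS n) F
    refine ⟨g, fun h hh => ?_⟩
    funext m
    by_cases hm : m ∈ M
    · have h1 := hn (h, m) (Finset.mem_product.mpr ⟨hh, hm⟩)
      show P2 (h, m) = _
      rw [← h1, hg h hh]
    · show P2 (h, m) = _
      rw [show P2 (h, m) = (0 : V →ₗ[k] V) from hPv h m hm, hs _ m hm]
  -- post-surjectivity of σ_P at δ_1 vv
  have hasym : Asymptotic (Pi.single 1 (vv ())) (nucaMap M P 0) := by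
    rw [nucaMap_zero]
    refine Set.Finite.subset (Set.finite_singleton 1) (fun h hh => ?_)
    simp only [Set.mem_setOf_eq, Pi.zero_apply] at hh
    by_contra hc
    exact hh (Pi.single_eq_of_ne hc _)
  obtain ⟨u, hu1, hu2⟩ := hpost P hPS 0 (Pi.single 1 (vv ())) hasym
  have hufin : Set.Finite {h | u h ≠ 0} := by
    have : {h | u h ≠ 0} = {h : G | u h ≠ (0 : G → V) h} := rfl
    rw [this]; exact hu1
  set T : Finset G := hufin.toFinset with hT
  have hA1 : {n | T ⊆ En n} ∈ U := hUle (hEn T)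
  have hA2 : {n | ∀ c ∈ ((T * M⁻¹) ×ˢ M : Finset (G × G)), p n c.1 c.2 = P2 c} ∈ U := hP2 _
  have hA3 : {n | v n = vv ()} ∈ U := by
    have := hvv {()}
    refine Filter.mem_of_superset this (fun n hn => hn () (Finset.mem_singleton_self ()))
  obtain ⟨n, hn1, hn2, hn3⟩ :=
    Filter.nonempty_of_mem (Filter.inter_mem hA1 (Filter.inter_mem hA2 hA3))
  refine hv n u (fun h hh => hn1 (hufin.mem_toFinset.mpr hh)) ?_
  have : nucaMap M (p n) u = nucaMap M P u := by
    funext h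
    by_cases hcase : ∀ m ∈ M, u (h * m) = 0
    · unfold nucaMap
      rw [Finset.sum_eq_zero fun m hm => by rw [hcase m hm, map_zero]]
      exact (Finset.sum_eq_zero fun m hm => by rw [hcase m hm, map_zero]).symm
    · push_neg at hcase
      obtain ⟨m, hm, hum⟩ := hcase
      have hhW : h ∈ T * M⁻¹ := by
        have h1 : h * m ∈ T := hufin.mem_toFinset.mpr hum
        have h2 := Finset.mul_mem_mul h1 (Finset.inv_mem_inv hm)
        simpa using h2
      refine nucaMap_congr (fun m' hm' => ?_) (fun _ _ => rfl)
      exact hn2 (h, m') (Finset.mem_product.mpr ⟨hhW, hm'⟩)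
  rw [this, hu2, hn3]

lemma uniform_post_single [DecidableEq G] {M : Finset G} {s : G → G → (V →ₗ[k] V)}
    {E : Finset G}
    (hE : ∀ p ∈ orbitClosure s, ∀ v : V,
      ∃ u : G → V, (∀ h, u h ≠ 0 → h ∈ E) ∧ nucaMap M p u = Pi.single 1 v)
    {p : G → G → (V →ₗ[k] V)} (hp : p ∈ orbitClosure s) (g : G) (v : V) :
    ∃ u : G → V, (∀ h, u h ≠ 0 → h ∈ {g} * E) ∧ nucaMap M p u = Pi.single g v := by
  obtain ⟨u', hu1, hu2⟩ := hE (shiftC g⁻¹ p) (shiftC_mem_orbitClosure hp g⁻¹) v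
  refine ⟨fun h => u' (g⁻¹ * h), fun h hh => ?_, ?_⟩
  · have : g⁻¹ * h ∈ E := hu1 _ hh
    have h2 : g * (g⁻¹ * h) ∈ ({g} : Finset G) * E :=
      Finset.mul_mem_mul (Finset.mem_singleton_self g) this
    simpa using h2
  · funext h
    have key : nucaMap M p (fun h' => u' (g⁻¹ * h')) h =
        nucaMap M (shiftC g⁻¹ p) u' (g⁻¹ * h) := by
      unfold nucaMap shiftC
      refine Finset.sum_congr rfl (fun m hm => ?_)
      rw [inv_inv]
      congr 1
      · rw [show g * (g⁻¹ * h) = h by group]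
      · rw [mul_assoc]
    rw [key, hu2]
    rcases eq_or_ne h g with rfl | hne
    · rw [Pi.single_eq_same, show h⁻¹ * h = 1 by group, Pi.single_eq_same]
    · rw [Pi.single_eq_of_ne hne, Pi.single_eq_of_ne (fun hc => hne ?_)]
      rw [show h = g * (g⁻¹ * h) by group, hc, mul_one]

lemma uniform_post_all [DecidableEq G] {M : Finset G} {s : G → G → (V →ₗ[k] V)}
    {E : Finset G}
    (hE : ∀ p ∈ orbitClosure s, ∀ v : V,
      ∃ u : G → V, (∀ h, u h ≠ 0 → h ∈ E) ∧ nucaMap M p u = Pi.single 1 v)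
    {p : G → G → (V →ₗ[k] V)} (hp : p ∈ orbitClosure s) (S : Finset G) :
    ∀ w : G → V, (∀ h, w h ≠ 0 → h ∈ S) →
      ∃ u : G → V, (∀ h, u h ≠ 0 → h ∈ S * E) ∧ nucaMap M p u = w := by
  induction S using Finset.induction_on with
  | empty =>
    intro w hw
    refine ⟨0, fun h hh => absurd rfl hh, ?_⟩
    rw [nucaMap_zero]
    funext h
    by_contra hc
    exact absurd (hw h (fun hc2 => hc (hc2.symm))) (Finset.notMem_empty h)
  | @insert a S' ha ih =>
    intro w hw
    set w2 : G → V := fun h => w h - Pi.single (M := fun _ : G => V) a (w a) h with hw2def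
    have hw' : ∀ h, w2 h ≠ 0 → h ∈ S' := by
      intro h hh
      rw [hw2def] at hh
      rcases eq_or_ne h a with rfl | hne
      · exact absurd (by simp) hh
      · have : w h ≠ 0 := by
          simpa [Pi.single_eq_of_ne hne] using hh
        rcases Finset.mem_insert.mp (hw h this) with h1 | h1
        · exact absurd h1 hne
        · exact h1
    obtain ⟨u1, hu11, hu12⟩ := ih _ hw'
    obtain ⟨u2, hu21, hu22⟩ := uniform_post_single hE hp a (w a)
    refine ⟨u1 + u2, fun h hh => ?_, ?_⟩
    · have : u1 h ≠ 0 ∨ u2 h ≠ 0 := by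
        by_contra hc
        push_neg at hc
        exact hh (by simp [Pi.add_apply, hc.1, hc.2])
      rcases this with h1 | h1
      · exact Finset.mul_subset_mul_right (Finset.subset_insert a S') (hu11 h h1)
      · exact Finset.mul_subset_mul_right (Finset.singleton_subset_iff.mpr
          (Finset.mem_insert_self a S')) (hu21 h h1)
    · rw [nucaMap_add, hu12, hu22]
      funext h
      rw [Pi.add_apply, hw2def]
      simp

lemma preInj_stable {M : Finset G} {s : G → G → (V →ₗ[k] V)}
    (hpre : PreInjective (nucaMap M s))
    {p : G → G → (V →ₗ[k] V)} (hp : p ∈ orbitClosure s) :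
    ∀ z : G → V, Set.Finite {h | z h ≠ 0} → nucaMap M p z = 0 → z = 0 := by
  classical
  intro z hzfin hz
  set T : Finset G := hzfin.toFinset with hT
  obtain ⟨g, hg⟩ := (mem_orbitClosure_iff s p).mp hp (T * M⁻¹)
  have h1 : nucaMap M (shiftC g s) z = 0 := by
    funext h
    by_cases hcase : ∀ m ∈ M, z (h * m) = 0
    · exact Finset.sum_eq_zero fun m hm => by rw [hcase m hm, map_zero]
    · push_neg at hcase
      obtain ⟨m, hm, hzm⟩ := hcase
      have hhW : h ∈ T * M⁻¹ := by
        have := Finset.mul_mem_mul (hzfin.mem_toFinset.mpr hzm) (Finset.inv_mem_inv hm)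
        simpa using this
      have hcoef : ∀ m' ∈ M, shiftC g s h m' = p h m' := by
        intro m' _
        rw [hg h hhW]; rfl
      calc nucaMap M (shiftC g s) z h = nucaMap M p z h :=
            nucaMap_congr hcoef (fun _ _ => rfl)
        _ = 0 := congrFun hz h
  have h2 : nucaMap M s (fun h => z (g * h)) = 0 := by
    funext h'
    have := congrFun h1 (g * h')
    rw [nucaMap_shiftC] at this
    rw [show g⁻¹ * (g * h') = h' by group] at this
    rw [this]
    rfl
  have hasym : Asymptotic (fun h => z (g * h)) (0 : G → V) :=
    Set.Finite.preimage ((mul_right_injective g).injOn) hzfin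
  have h3 : (fun h => z (g * h)) = 0 := by
    refine hpre _ 0 hasym ?_
    rw [h2, nucaMap_zero]
  funext h
  have := congrFun h3 (g⁻¹ * h)
  rw [show g * (g⁻¹ * h) = h by group] at this
  exact this

lemma BtoC_inj [Finite V] [Countable G] [DecidableEq G] {M : Finset G}
    {s : G → G → (V →ₗ[k] V)} (hs : ∀ g, ∀ m ∉ M, s g m = 0)
    (hpre : PreInjective (nucaMap M s))
    (hpost : ∀ p ∈ orbitClosure s, PostSurjective (nucaMap M p)) :
    ∀ p ∈ orbitClosure s, Function.Injective (nucaMap M p) := by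
  obtain ⟨E, hE⟩ := uniform_post hs hpost
  intro p hp x x' hxx
  have hd : nucaMap M p (x - x') = 0 := by rw [nucaMap_sub, hxx, sub_self]
  set d : G → V := x - x' with hddef
  suffices hzero : d = 0 by
    funext g; have := congrFun hzero g
    simpa [hddef, sub_eq_zero] using this
  funext g₀
  by_contra hne
  set F : Finset G := insert g₀ (({g₀} * E⁻¹) * M) with hF
  set u : G → V := fun h => if h ∈ F then d h else 0 with hu
  set w : G → V := nucaMap M p u with hw
  set C : Finset G := (F * M⁻¹).filter (fun h => ¬ ∀ m ∈ M, h * m ∈ F) with hC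
  have hwsupp : ∀ h, w h ≠ 0 → h ∈ C := by
    intro h hh
    have husupp : ∀ h', u h' ≠ 0 → h' ∈ F := by
      intro h' hh'
      by_contra hc
      exact hh' (by rw [hu]; simp [hc])
    have hmem : h ∈ F * M⁻¹ := nucaMap_support husupp hh
    refine Finset.mem_filter.mpr ⟨hmem, fun hall => ?_⟩
    have : w h = nucaMap M p d h := by
      refine nucaMap_congr (fun _ _ => rfl) (fun m hm => ?_)
      rw [hu]; simp [hall m hm]
    rw [this] at hh
    exact hh (congrFun hd h)
  obtain ⟨u2, hu21, hu22⟩ := uniform_post_all hE hp C w hwsupp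
  have hz : nucaMap M p (u - u2) = 0 := by
    rw [nucaMap_sub, hu22, hw, sub_self]
  have hzfin : Set.Finite {h | (u - u2) h ≠ 0} := by
    refine Set.Finite.subset (Set.Finite.union F.finite_toSet (C * E).finite_toSet)
      (fun h hh => ?_)
    simp only [Set.mem_setOf_eq, Pi.sub_apply] at hh
    by_cases h1 : u h = 0
    · have h2 : u2 h ≠ 0 := fun hc => hh (by rw [h1, hc, sub_zero])
      exact Or.inr (hu21 h h2)
    · have : h ∈ F := by
        by_contra hc
        exact h1 (by rw [hu]; simp [hc])
      exact Or.inl this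
  have hzz := preInj_stable hpre hp (u - u2) hzfin hz
  have hg₀F : g₀ ∈ F := Finset.mem_insert_self _ _
  have hu2g₀ : u2 g₀ = 0 := by
    by_contra hc
    have hmem : g₀ ∈ C * E := hu21 g₀ hc
    obtain ⟨c, hcC, e, heE, hce⟩ := Finset.mem_mul.mp hmem
    have hcfilter := (Finset.mem_filter.mp hcC).2
    refine hcfilter (fun m hm => ?_)
    have hc1 : c = g₀ * e⁻¹ := by rw [← hce]; group
    have : c * m ∈ ({g₀} * E⁻¹) * M := by
      refine Finset.mul_mem_mul ?_ hm
      rw [hc1]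
      exact Finset.mul_mem_mul (Finset.mem_singleton_self g₀) (Finset.inv_mem_inv heE)
    rw [hF]
    exact Finset.mem_insert_of_mem this
  have : (u - u2) g₀ = d g₀ := by
    rw [Pi.sub_apply, hu2g₀, sub_zero, hu]
    simp [hg₀F]
  rw [hzz] at this
  exact hne (this.symm ▸ rfl)


end NucaAux

/-- Over a finite vector space alphabet, a linear NUCA with finite memory is
invertible iff it is pre-injective and stably post-surjective, iff it is
surjective and stably injective. -/
theorem stmt15 {k V G : Type*} [Field k] [Finite k] [AddCommGroup V] [Module k V]
    [FiniteDimensional k V] [Group G] [Countable G]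
    (M : Finset G) (s : G → G → (V →ₗ[k] V)) (hs : ∀ g, ∀ m ∉ M, s g m = 0) :
    (IsInvertibleNuca k (nucaMap M s) ↔
      (PreInjective (nucaMap M s) ∧
        ∀ p ∈ orbitClosure s, PostSurjective (nucaMap M p))) ∧
    (IsInvertibleNuca k (nucaMap M s) ↔
      (Function.Surjective (nucaMap M s) ∧
        ∀ p ∈ orbitClosure s, Function.Injective (nucaMap M p))) := by
  classical
  haveI : Finite V := Module.finite_of_finite k
  have hCtoInv : (Function.Surjective (nucaMap M s) ∧
      ∀ p ∈ orbitClosure s, Function.Injective (nucaMap M p)) →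
      IsInvertibleNuca k (nucaMap M s) := by
    rintro ⟨hsurj, hinj⟩
    obtain ⟨E, hE⟩ := NucaAux.uniform_inj hs hinj
    obtain ⟨t, hl⟩ := NucaAux.stableInj_leftInv hE
    refine ⟨E, t, hl, fun x => ?_⟩
    obtain ⟨y, rfl⟩ := hsurj x
    rw [hl y]
  have hInvToC : IsInvertibleNuca k (nucaMap M s) →
      (Function.Surjective (nucaMap M s) ∧
        ∀ p ∈ orbitClosure s, Function.Injective (nucaMap M p)) := by
    rintro ⟨N, t, hl, hr⟩
    exact ⟨fun x => ⟨nucaMap N t x, hr x⟩, fun p hp => NucaAux.inv_stableInj hl hp⟩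
  have hInvToB : IsInvertibleNuca k (nucaMap M s) →
      (PreInjective (nucaMap M s) ∧
        ∀ p ∈ orbitClosure s, PostSurjective (nucaMap M p)) := by
    rintro ⟨N, t, hl, hr⟩
    constructor
    · intro x y _ hxy
      have := congrArg (nucaMap N t) hxy
      rwa [hl, hl] at this
    · exact fun p hp => NucaAux.inv_stablePost hr hp
  have hBtoC : (PreInjective (nucaMap M s) ∧
      ∀ p ∈ orbitClosure s, PostSurjective (nucaMap M p)) →
      (Function.Surjective (nucaMap M s) ∧
        ∀ p ∈ orbitClosure s, Function.Injective (nucaMap M p)) := by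
    rintro ⟨hpre, hpost⟩
    have hpostsurj : PostSurjective (nucaMap M s) :=
      hpost s (NucaAux.self_mem_orbitClosure s)
    exact ⟨NucaAux.post_to_surj hpostsurj, NucaAux.BtoC_inj hs hpre hpost⟩
  exact ⟨⟨hInvToB, fun hb => hCtoInv (hBtoC hb)⟩, ⟨hInvToC, hCtoInv⟩⟩
end
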